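/- arXiv:1906.08890 — 10 statements merged into one kernel-verified Lean document; each statement's English description precedes it below -/
import Mathlib

section
/- For every n ≥ 1 and every family of one-bit strategies g : Fin n → (Bool → Bool), the fraction of strings x : Fin n → Bool of even Hamming weight |x| for which (∑_{i} g_i(x_i)) ≡ |x|/2 (mod 2) is at most 1/2 + 2^{-⌈n/2⌉}. (Equivalently: any classical strategy for the n-player Parity Halving Game, where each player sees only their own input bit, wins on the uniform distribution over even-parity inputs with probability at most 1/2 + 2^{-⌈n/2⌉}.) -/
open Finset Complex
set_option maxHeartbeats 1000000

/-- Hamming weight of a Boolean string. -/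
def hamming {n : ℕ} (x : Fin n → Bool) : ℕ :=
  (Finset.univ.filter fun i => x i = true).card

-- sum over all boolean strings of a product factorizes
lemma phg_sum_prod {n : ℕ} (f : Fin n → Bool → ℂ) :
    ∑ x : Fin n → Bool, ∏ i, f i (x i) = ∏ i, (f i false + f i true) := by
  rw [← Fintype.prod_sum f]
  exact Finset.prod_congr rfl fun i _ => by rw [Fintype.sum_bool]; ring

lemma phg_prod_ite {n : ℕ} (P : Fin n → Prop) [DecidablePred P] (c : ℂ) :
    (∏ i, if P i then c else 1) = c ^ (Finset.univ.filter P).card := by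
  rw [Finset.prod_ite, Finset.prod_const, Finset.prod_const_one, mul_one]

-- pointwise indicator identity
lemma phg_pointwise {h p : ℕ} :
    ((1 + (-1 : ℂ) ^ h) / 2) * ((1 + (-1 : ℂ) ^ p * Complex.I ^ h) / 2)
      = if (Even h ∧ p % 2 = (h / 2) % 2) then 1 else 0 := by
  rcases Nat.even_or_odd h with ⟨m, hm⟩ | ho
  · have h2 : h / 2 = m := by omega
    have hI : Complex.I ^ h = (-1 : ℂ) ^ m := by
      rw [hm, ← two_mul, pow_mul, Complex.I_sq]
    have hE : (-1 : ℂ) ^ h = 1 := Even.neg_one_pow ⟨m, hm⟩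
    by_cases hc : p % 2 = m % 2
    · have : Even (p + m) := by rw [Nat.even_add]; simp [Nat.even_iff]; omega
      rw [hI, ← pow_add]  -- (-1)^p * (-1)^m = (-1)^(p+m)
      rw [hE, this.neg_one_pow, if_pos ⟨⟨m, hm⟩, by rw [h2]; exact hc⟩]
      norm_num
    · have : Odd (p + m) := by
        rw [Nat.odd_add]; simp [Nat.even_iff, Nat.odd_iff]; omega
      rw [hI, ← pow_add, hE, this.neg_one_pow,
        if_neg (by rw [h2]; exact fun hh => hc hh.2)]
      norm_num
  · rw [ho.neg_one_pow, if_neg (by exact fun hh => (Nat.not_even_iff_odd.mpr ho) hh.1)]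
    norm_num

-- each factor is a unit times (1+I)
lemma phg_factor (a b : Bool) :
    ∃ k : ℕ, ((if a = true then (-1 : ℂ) else 1) + (if b = true then (-1 : ℂ) else 1) * Complex.I)
      = Complex.I ^ k * (1 + Complex.I) := by
  cases a <;> cases b
  · exact ⟨0, by norm_num⟩
  · exact ⟨3, by simp [pow_succ, Complex.I_mul_I]; ring_nf; rw [Complex.I_sq]; ring⟩
  · exact ⟨1, by simp; ring_nf; rw [Complex.I_sq]; ring⟩
  · exact ⟨2, by simp [pow_succ, Complex.I_mul_I]; ring⟩

lemma phg_I_pow_mod (m : ℕ) : Complex.I ^ m = Complex.I ^ (m % 4) := by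
  conv_lhs => rw [← Nat.div_add_mod m 4, pow_add, pow_mul, Complex.I_pow_four, one_pow, one_mul]

lemma phg_re_bound (K n : ℕ) :
    |(Complex.I ^ K * (1 + Complex.I) ^ n).re| ≤ 2 ^ (n / 2) := by
  have hsq : (1 + Complex.I) ^ 2 = 2 * Complex.I := by
    ring_nf; rw [Complex.I_sq]; ring
  have hn : n = 2 * (n / 2) + n % 2 := (Nat.div_add_mod n 2).symm
  set q := n / 2 with hq
  set r := n % 2 with hrdef
  have key : Complex.I ^ K * (1 + Complex.I) ^ n
      = (2 : ℂ) ^ q * (Complex.I ^ ((K + q) % 4) * (1 + Complex.I) ^ r) := by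
    rw [← phg_I_pow_mod, pow_add]
    conv_lhs => rw [hn, pow_add, pow_mul, hsq, mul_pow]
    ring
  rw [key]
  have h2 : ((2 : ℂ) ^ q * (Complex.I ^ ((K + q) % 4) * (1 + Complex.I) ^ r)).re
      = 2 ^ q * (Complex.I ^ ((K + q) % 4) * (1 + Complex.I) ^ r).re := by
    rw [show ((2:ℂ)^q) = ((2^q : ℝ) : ℂ) by push_cast; ring, Complex.re_ofReal_mul]
  rw [h2, abs_mul, _root_.abs_of_nonneg (by positivity : (0:ℝ) ≤ 2 ^ q)]
  have hb : (K + q) % 4 < 4 := Nat.mod_lt _ (by norm_num)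
  have hr : r < 2 := Nat.mod_lt _ (by norm_num)
  calc 2 ^ q * |(Complex.I ^ ((K + q) % 4) * (1 + Complex.I) ^ r).re|
      ≤ 2 ^ q * 1 := by
        gcongr
        set b := (K + q) % 4
        interval_cases b <;> interval_cases r <;>
          norm_num [pow_succ, Complex.I_mul_I, Complex.add_re, Complex.mul_re]
    _ = 2 ^ q := mul_one _

/-- Any classical strategy for the n-player Parity Halving Game (each player sees only
their own input bit) wins on the uniform distribution over even-parity inputs with
probability at most 1/2 + 2^{-⌈n/2⌉}. -/
theorem parity_halving_game_classical_bound (n : ℕ) (hn : 1 ≤ n)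
    (g : Fin n → Bool → Bool) :
    ((Finset.univ.filter fun x : Fin n → Bool =>
        Even (hamming x) ∧
        (Finset.univ.filter fun i => g i (x i) = true).card % 2 = (hamming x / 2) % 2).card : ℝ) /
      ((Finset.univ.filter fun x : Fin n → Bool => Even (hamming x)).card : ℝ)
      ≤ 1 / 2 + (2 : ℝ) ^ (-(((n + 1) / 2 : ℕ) : ℤ)) := by
  set c : ℕ := (n + 1) / 2 with hc
  set pcard : (Fin n → Bool) → ℕ :=
    fun x => (Finset.univ.filter fun i => g i (x i) = true).card with hpcard
  set F : ℂ := ∏ i, ((if g i false = true then (-1 : ℂ) else 1)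
      + (if g i true = true then (-1 : ℂ) else 1) * Complex.I) with hF
  -- expressing powers as products
  have hham : ∀ x : Fin n → Bool, ∀ c : ℂ,
      c ^ hamming x = ∏ i, if x i = true then c else 1 := fun x c => (phg_prod_ite _ c).symm
  have hpc : ∀ x : Fin n → Bool,
      (-1 : ℂ) ^ pcard x = ∏ i, if g i (x i) = true then (-1 : ℂ) else 1 :=
    fun x => (phg_prod_ite _ _).symm
  -- the four sums
  have hsum1 : ∑ _x : Fin n → Bool, (1 : ℂ) = (2 : ℂ) ^ n := by
    simp [Finset.card_univ]
  have hsumA : ∑ x : Fin n → Bool, (-1 : ℂ) ^ hamming x = 0 := by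
    calc ∑ x : Fin n → Bool, (-1 : ℂ) ^ hamming x
        = ∑ x : Fin n → Bool, ∏ i, (fun (_ : Fin n) (b : Bool) =>
            if b = true then (-1 : ℂ) else 1) i (x i) := by
          exact Finset.sum_congr rfl fun x _ => hham x _
      _ = ∏ i : Fin n, ((fun (_ : Fin n) (b : Bool) => if b = true then (-1 : ℂ) else 1) i false
            + (fun (_ : Fin n) (b : Bool) => if b = true then (-1 : ℂ) else 1) i true) :=
          phg_sum_prod (fun (_ : Fin n) (b : Bool) => if b = true then (-1 : ℂ) else 1)
      _ = ∏ i : Fin n, ((1 : ℂ) + (-1)) := by simp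
      _ = 0 := by simp [Finset.prod_const, zero_pow (by omega : n ≠ 0)]
  have hsumB : ∑ x : Fin n → Bool, (-1 : ℂ) ^ pcard x * Complex.I ^ hamming x = F := by
    calc ∑ x : Fin n → Bool, (-1 : ℂ) ^ pcard x * Complex.I ^ hamming x
        = ∑ x : Fin n → Bool, ∏ i, (fun (i : Fin n) (b : Bool) =>
            (if g i b = true then (-1 : ℂ) else 1) * (if b = true then Complex.I else 1)) i (x i) := by
          refine Finset.sum_congr rfl fun x _ => ?_
          rw [hpc x, hham x, ← Finset.prod_mul_distrib]
      _ = ∏ i : Fin n, ((fun (i : Fin n) (b : Bool) =>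
            (if g i b = true then (-1 : ℂ) else 1) * (if b = true then Complex.I else 1)) i false
            + (fun (i : Fin n) (b : Bool) =>
            (if g i b = true then (-1 : ℂ) else 1) * (if b = true then Complex.I else 1)) i true) :=
          phg_sum_prod (fun (i : Fin n) (b : Bool) =>
            (if g i b = true then (-1 : ℂ) else 1) * (if b = true then Complex.I else 1))
      _ = F := by rw [hF]; exact Finset.prod_congr rfl fun i _ => by simp
  have hsumC : ∑ x : Fin n → Bool,
      (-1 : ℂ) ^ pcard x * ((-1 : ℂ) ^ hamming x * Complex.I ^ hamming x)
      = (starRingEnd ℂ) F := by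
    calc ∑ x : Fin n → Bool,
        (-1 : ℂ) ^ pcard x * ((-1 : ℂ) ^ hamming x * Complex.I ^ hamming x)
        = ∑ x : Fin n → Bool, ∏ i, (fun (i : Fin n) (b : Bool) =>
            (if g i b = true then (-1 : ℂ) else 1) *
            ((if b = true then (-1 : ℂ) else 1) * (if b = true then Complex.I else 1))) i (x i) := by
          refine Finset.sum_congr rfl fun x _ => ?_
          rw [hpc x, hham x (-1), hham x Complex.I, ← Finset.prod_mul_distrib,
            ← Finset.prod_mul_distrib]
      _ = ∏ i : Fin n, ((fun (i : Fin n) (b : Bool) =>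
            (if g i b = true then (-1 : ℂ) else 1) *
            ((if b = true then (-1 : ℂ) else 1) * (if b = true then Complex.I else 1))) i false
            + (fun (i : Fin n) (b : Bool) =>
            (if g i b = true then (-1 : ℂ) else 1) *
            ((if b = true then (-1 : ℂ) else 1) * (if b = true then Complex.I else 1))) i true) :=
          phg_sum_prod (fun (i : Fin n) (b : Bool) =>
            (if g i b = true then (-1 : ℂ) else 1) *
            ((if b = true then (-1 : ℂ) else 1) * (if b = true then Complex.I else 1)))
      _ = (starRingEnd ℂ) F := by
          rw [hF, map_prod]
          refine Finset.prod_congr rfl fun i _ => ?_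
          cases hf : g i false <;> cases ht : g i true <;> simp [hf, ht]
  -- the main counting identities
  set W : ℕ := (Finset.univ.filter fun x : Fin n → Bool =>
      Even (hamming x) ∧ pcard x % 2 = (hamming x / 2) % 2).card with hW
  set E : ℕ := (Finset.univ.filter fun x : Fin n → Bool => Even (hamming x)).card with hE
  have hWC : (W : ℂ) = ((2 : ℂ) ^ n + (F + (starRingEnd ℂ) F)) / 4 := by
    rw [hW, Finset.card_filter, Nat.cast_sum]
    push_cast
    calc ∑ x : Fin n → Bool,
        (if Even (hamming x) ∧ pcard x % 2 = (hamming x / 2) % 2 then (1 : ℂ) else 0)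
        = ∑ x : Fin n → Bool, ((1 + (-1 : ℂ) ^ hamming x) / 2) *
            ((1 + (-1 : ℂ) ^ pcard x * Complex.I ^ hamming x) / 2) := by
          exact Finset.sum_congr rfl fun x _ => (phg_pointwise).symm
      _ = ∑ x : Fin n → Bool, ((1 : ℂ) + (-1 : ℂ) ^ hamming x
            + (-1 : ℂ) ^ pcard x * Complex.I ^ hamming x
            + (-1 : ℂ) ^ pcard x * ((-1 : ℂ) ^ hamming x * Complex.I ^ hamming x)) / 4 := by
          exact Finset.sum_congr rfl fun x _ => by ring
      _ = ((2 : ℂ) ^ n + (F + (starRingEnd ℂ) F)) / 4 := by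
          rw [← Finset.sum_div]
          rw [Finset.sum_add_distrib, Finset.sum_add_distrib, Finset.sum_add_distrib,
            hsum1, hsumA, hsumB, hsumC]
          ring
  have hEC : (E : ℂ) = (2 : ℂ) ^ n / 2 := by
    rw [hE, Finset.card_filter, Nat.cast_sum]
    push_cast
    calc ∑ x : Fin n → Bool, (if Even (hamming x) then (1 : ℂ) else 0)
        = ∑ x : Fin n → Bool, (1 + (-1 : ℂ) ^ hamming x) / 2 := by
          refine Finset.sum_congr rfl fun x _ => ?_
          rcases Nat.even_or_odd (hamming x) with he | ho
          · rw [if_pos he, he.neg_one_pow]; norm_num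
          · rw [if_neg (Nat.not_even_iff_odd.mpr ho), ho.neg_one_pow]; norm_num
      _ = (2 : ℂ) ^ n / 2 := by
          rw [← Finset.sum_div, Finset.sum_add_distrib, hsum1, hsumA]; ring
  -- real versions
  have hWR : (W : ℝ) = (2 ^ n + 2 * F.re) / 4 := by
    have : (W : ℂ) = (((2 ^ n + 2 * F.re) / 4 : ℝ) : ℂ) := by
      rw [hWC, Complex.add_conj]; push_cast; ring
    exact_mod_cast this
  have hER : (E : ℝ) = 2 ^ n / 2 := by
    have : (E : ℂ) = (((2 ^ n / 2 : ℝ)) : ℂ) := by rw [hEC]; push_cast; ring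
    exact_mod_cast this
  -- bound on F.re
  have hFre : F.re ≤ 2 ^ (n / 2) := by
    choose k hk using fun i => phg_factor (g i false) (g i true)
    have : F = Complex.I ^ (∑ i, k i) * (1 + Complex.I) ^ n := by
      rw [hF, Finset.prod_congr rfl fun i _ => hk i, Finset.prod_mul_distrib,
        Finset.prod_pow_eq_pow_sum, Finset.prod_const, Finset.card_univ, Fintype.card_fin]
    rw [this]
    exact le_trans (le_abs_self _) (phg_re_bound _ n)
  -- final arithmetic
  rw [hWR, hER]
  have hpos : (0 : ℝ) < 2 ^ n / 2 := by positivity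
  rw [div_le_iff₀ hpos]
  have hzp : (2 : ℝ) ^ ((n / 2 : ℕ) : ℤ) = (2 : ℝ) ^ (-(c : ℤ)) * 2 ^ (n : ℤ) := by
    rw [← zpow_add₀ (by norm_num : (2 : ℝ) ≠ 0)]
    congr 1
    have : c + n / 2 = n := by omega
    push_cast
    omega
  have h2 : (2 : ℝ) ^ (n / 2 : ℕ) ≤ (2 : ℝ) ^ (-(c : ℤ)) * 2 ^ n := by
    rw [← zpow_natCast (2 : ℝ) (n / 2), hzp, zpow_natCast]
  have h3 : F.re ≤ (2 : ℝ) ^ (-(c : ℤ)) * 2 ^ n := le_trans hFre h2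
  nlinarith [h3, pow_pos (by norm_num : (0:ℝ) < 2) n]
end

section
/- Restricted Parity Halving Game bound: let n ≥ 1, let D ⊆ Fin n be a set of d ≤ n−1 'fixed' coordinates and ζ : Fin n → Bool a fixed assignment. For every family of functions g : Fin n → (Bool → Bool), the fraction of strings x : Fin n → Bool that have even Hamming weight, agree with ζ on D, and satisfy (∑_i g_i(x_i)) ≡ |x|/2 (mod 2), among all even-Hamming-weight strings agreeing with ζ on D, is at most 1/2 + 2^{-⌈(n−d)/2⌉}. -/
open Finset

namespace PHG

/-- ℓ¹ norm submultiplicativity on ℤ[i]. -/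
lemma l1_mul (z w : GaussianInt) :
    |(z*w).re| + |(z*w).im| ≤ (|z.re|+|z.im|) * (|w.re|+|w.im|) := by
  rw [Zsqrtd.re_mul, Zsqrtd.im_mul]
  have h1 : |z.re * w.re + -1 * z.im * w.im| ≤ |z.re| * |w.re| + |z.im| * |w.im| := by
    calc |z.re * w.re + -1 * z.im * w.im| ≤ |z.re*w.re| + |-1 * z.im * w.im| := abs_add_le _ _
    _ = |z.re| * |w.re| + |z.im| * |w.im| := by simp [abs_mul]
  have h2 : |z.re * w.im + z.im * w.re| ≤ |z.re| * |w.im| + |z.im| * |w.re| := by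
    calc |z.re * w.im + z.im * w.re| ≤ |z.re*w.im| + |z.im*w.re| := abs_add_le _ _
    _ = _ := by rw [abs_mul, abs_mul]
  nlinarith [abs_nonneg z.re, abs_nonneg z.im, abs_nonneg w.re, abs_nonneg w.im]

lemma key (u : GaussianInt) (hu : |u.re| + |u.im| ≤ 1) (m : ℕ) :
    |(u * (⟨1,1⟩ : GaussianInt)^m).re| ≤ 2^(m/2) ∧ |(u * (⟨1,1⟩ : GaussianInt)^m).im| ≤ 2^(m/2) := by
  induction m using Nat.twoStepInduction with
  | zero =>
    simp only [pow_zero, mul_one, Nat.zero_div, pow_zero]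
    constructor <;> [skip; skip] <;>
      nlinarith [abs_nonneg u.re, abs_nonneg u.im]
  | one =>
    simp only [pow_one]
    have hre : (u * (⟨1,1⟩ : GaussianInt)).re = u.re - u.im := by
      rw [Zsqrtd.re_mul]; ring
    have him : (u * (⟨1,1⟩ : GaussianInt)).im = u.re + u.im := by
      rw [Zsqrtd.im_mul]; ring
    rw [hre, him]
    constructor
    · calc |u.re - u.im| ≤ |u.re| + |u.im| := abs_sub _ _
      _ ≤ 2^(1/2) := by norm_num; omega
    · calc |u.re + u.im| ≤ |u.re| + |u.im| := abs_add_le _ _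
      _ ≤ 2^(1/2) := by norm_num; omega
  | more m ih _ =>
    set z := u * (⟨1,1⟩ : GaussianInt)^m with hz
    have hsq : (⟨1,1⟩ : GaussianInt) * ⟨1,1⟩ = ⟨0,2⟩ := by
      ext <;> simp [Zsqrtd.re_mul, Zsqrtd.im_mul]
    have hE : u * (⟨1,1⟩ : GaussianInt)^(m+2) = z * ⟨0,2⟩ := by
      rw [hz, pow_succ, pow_succ, ← hsq]; ring
    have hre : (z * (⟨0,2⟩ : GaussianInt)).re = -2 * z.im := by
      rw [Zsqrtd.re_mul]; ring
    have him : (z * (⟨0,2⟩ : GaussianInt)).im = 2 * z.re := by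
      rw [Zsqrtd.im_mul]; ring
    have hdiv : (m+2)/2 = m/2 + 1 := by omega
    rw [hE, hre, him, hdiv, pow_succ]
    obtain ⟨h1, h2⟩ := ih
    constructor
    · rw [abs_mul]; norm_num; omega
    · rw [abs_mul]; norm_num; omega

lemma neg_one_pow_GI (q : ℕ) : ((-1 : GaussianInt)^q) = ⟨(-1)^q, 0⟩ := by
  induction q with
  | zero => ext <;> simp
  | succ q ih => rw [pow_succ, ih, pow_succ]; ext <;> simp [Zsqrtd.re_mul, Zsqrtd.im_mul]

lemma i_pow (h : ℕ) : ((⟨0,1⟩ : GaussianInt)^h) =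
    ⟨if h % 2 = 0 then (-1)^(h/2) else 0, if h % 2 = 0 then 0 else (-1)^(h/2)⟩ := by
  have hsq : (⟨0,1⟩ : GaussianInt)^2 = -1 := by
    rw [pow_two]; ext <;> simp [Zsqrtd.re_mul, Zsqrtd.im_mul]
  have hh : h = 2 * (h/2) + h % 2 := (Nat.div_add_mod h 2).symm
  rw [show (⟨0,1⟩ : GaussianInt)^h = (⟨0,1⟩ : GaussianInt)^(2*(h/2) + h % 2) by rw [← hh]]
  rw [pow_add, pow_mul, hsq, neg_one_pow_GI]
  rcases Nat.mod_two_eq_zero_or_one h with h2 | h2 <;> rw [h2] <;>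
    ext <;> simp [Zsqrtd.re_mul, Zsqrtd.im_mul]

/-- Summing a product of single-coordinate functions over the Boolean cube. -/
lemma sum_prod_bool {n : ℕ} {R : Type*} [CommSemiring R] (f : Fin n → Bool → R) :
    ∑ x : Fin n → Bool, ∏ i, f i (x i) = ∏ i, (f i false + f i true) := by
  classical
  rw [← Fintype.piFinset_univ, ← Finset.prod_univ_sum]
  exact Finset.prod_congr rfl fun i _ => by rw [Fintype.sum_bool]; ring

lemma prod_ind {n : ℕ} {R : Type*} [CommRing R] (D : Finset (Fin n)) (ζ : Fin n → Bool)
    (c : Fin n → Bool → R) (x : Fin n → Bool) :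
    ∏ i, (if i ∈ D ∧ ¬ (x i = ζ i) then 0 else c i (x i)) =
      if (∀ i ∈ D, x i = ζ i) then ∏ i, c i (x i) else 0 := by
  classical
  by_cases hc : ∀ i ∈ D, x i = ζ i
  · rw [if_pos hc]
    refine Finset.prod_congr rfl fun i _ => ?_
    by_cases hi : i ∈ D
    · rw [if_neg]; push_neg; intro h; exact (hc i hi)
    · rw [if_neg]; tauto
  · rw [if_neg hc]
    push_neg at hc
    obtain ⟨i, hi, hne⟩ := hc
    exact Finset.prod_eq_zero (Finset.mem_univ i) (by rw [if_pos ⟨hi, hne⟩])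

lemma master {n : ℕ} {R : Type*} [CommRing R] (D : Finset (Fin n)) (ζ : Fin n → Bool)
    (c : Fin n → Bool → R) :
    ∑ x : Fin n → Bool, (if (∀ i ∈ D, x i = ζ i) then ∏ i, c i (x i) else 0)
      = ∏ i, ((if i ∈ D ∧ ¬((false : Bool) = ζ i) then 0 else c i false)
            + (if i ∈ D ∧ ¬((true : Bool) = ζ i) then 0 else c i true)) := by
  classical
  calc ∑ x : Fin n → Bool, (if (∀ i ∈ D, x i = ζ i) then ∏ i, c i (x i) else 0)
      = ∑ x : Fin n → Bool, ∏ i, (if i ∈ D ∧ ¬ (x i = ζ i) then 0 else c i (x i)) :=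
        Finset.sum_congr rfl fun x _ => (prod_ind D ζ c x).symm
    _ = _ := sum_prod_bool (fun i b => if i ∈ D ∧ ¬ (b = ζ i) then 0 else c i b)

/-- The real-part additive homomorphism. -/
def reHom : GaussianInt →+ ℤ where
  toFun := Zsqrtd.re
  map_zero' := rfl
  map_add' := fun _ _ => rfl

lemma parity_term (a b : ℕ) :
    (1 + ((-1:ℤ))^a * (-1)^b) = if a % 2 = b % 2 then 2 else 0 := by
  rw [neg_one_pow_eq_pow_mod_two (n := a), neg_one_pow_eq_pow_mod_two (n := b)]
  rcases Nat.mod_two_eq_zero_or_one a with ha | ha <;>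
    rcases Nat.mod_two_eq_zero_or_one b with hb | hb <;>
      rw [ha, hb] <;> norm_num

end PHG

open PHG in
/-- Restricted Parity Halving Game bound: with `d = D.card ≤ n-1` coordinates fixed to `ζ`,
any family of one-bit strategies wins, on the uniform distribution over even-parity strings
agreeing with `ζ` on `D`, with probability at most `1/2 + 2^{-⌈(n-d)/2⌉}`. -/
theorem restricted_parity_halving_game_bound (n : ℕ) (hn : 1 ≤ n)
    (D : Finset (Fin n)) (hD : D.card ≤ n - 1) (ζ : Fin n → Bool)
    (g : Fin n → Bool → Bool) :
    ((Finset.univ.filter fun x : Fin n → Bool =>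
        (Even (hamming x) ∧ ∀ i ∈ D, x i = ζ i) ∧
        (Finset.univ.filter fun i => g i (x i) = true).card % 2 = (hamming x / 2) % 2).card : ℝ) /
      ((Finset.univ.filter fun x : Fin n → Bool =>
        Even (hamming x) ∧ ∀ i ∈ D, x i = ζ i).card : ℝ)
      ≤ 1 / 2 + (2 : ℝ) ^ (-(((n - D.card + 1) / 2 : ℕ) : ℤ)) := by
  classical
  have hdn : D.card ≤ n - 1 := hD
  set m := n - D.card with hm
  have hm1 : 1 ≤ m := by
    have := D.card_le_univ.trans_eq (by simp : (Finset.univ : Finset (Fin n)).card = n)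
    omega
  have hDc : Dᶜ.card = m := by
    rw [Finset.card_compl, Fintype.card_fin]
  have hDcne : Dᶜ.Nonempty := Finset.card_pos.mp (by omega)
  have hsum2 : m/2 + (m+1)/2 = m := by omega
  -- Step 1: number of consistent strings is 2^m
  have h1 : ((Finset.univ.filter fun x : Fin n → Bool => ∀ i ∈ D, x i = ζ i).card : ℤ)
      = 2^m := by
    have hmas := master D ζ (fun _ _ => (1:ℤ))
    simp only [Finset.prod_const_one] at hmas
    rw [Finset.sum_boole] at hmas
    rw [hmas, ← Finset.prod_mul_prod_compl D]
    have hA : (∏ i ∈ D, ((if i ∈ D ∧ ¬((false : Bool) = ζ i) then (0:ℤ) else 1)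
        + (if i ∈ D ∧ ¬((true : Bool) = ζ i) then 0 else 1))) = 1 :=
      Finset.prod_eq_one fun i hi => by cases hζ : ζ i <;> simp [hi, hζ]
    have hB : (∏ i ∈ Dᶜ, ((if i ∈ D ∧ ¬((false : Bool) = ζ i) then (0:ℤ) else 1)
        + (if i ∈ D ∧ ¬((true : Bool) = ζ i) then 0 else 1))) = 2^m := by
      have hfac : ∀ i ∈ Dᶜ, ((if i ∈ D ∧ ¬((false : Bool) = ζ i) then (0:ℤ) else 1)
          + (if i ∈ D ∧ ¬((true : Bool) = ζ i) then 0 else 1)) = 2 := by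
        intro i hi
        have hi' : i ∉ D := Finset.mem_compl.mp hi
        norm_num [hi']
      rw [Finset.prod_congr rfl hfac, Finset.prod_const, hDc]
    rw [hA, hB, one_mul]
  -- Step 2: signed count of consistent strings is 0
  have h2 : (∑ x : Fin n → Bool,
      (if (∀ i ∈ D, x i = ζ i) then ((-1:ℤ))^(hamming x) else 0)) = 0 := by
    have hpt : ∀ x : Fin n → Bool,
        (∏ i, ((-1:ℤ))^(if x i = true then 1 else 0)) = (-1)^(hamming x) := by
      intro x
      rw [Finset.prod_pow_eq_pow_sum]
      congr 1
      rw [hamming, Finset.card_filter]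
    have hmas := master D ζ (fun i b => ((-1:ℤ))^(if b = true then 1 else 0))
    simp only [hpt] at hmas
    rw [hmas]
    obtain ⟨i, hi0⟩ := hDcne
    have hi : i ∉ D := Finset.mem_compl.mp hi0
    refine Finset.prod_eq_zero (Finset.mem_univ i) ?_
    simp [hi]
  -- Step 3: 2 * |E| = 2^m
  have h3 : 2 * ((Finset.univ.filter fun x : Fin n → Bool =>
      Even (hamming x) ∧ ∀ i ∈ D, x i = ζ i).card : ℤ) = 2^m := by
    have hsplit : ∀ x : Fin n → Bool,
        (if (∀ i ∈ D, x i = ζ i) then ((-1:ℤ))^(hamming x) else 0)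
          = 2 * (if (Even (hamming x) ∧ ∀ i ∈ D, x i = ζ i) then 1 else 0)
            - (if (∀ i ∈ D, x i = ζ i) then 1 else 0) := by
      intro x
      by_cases hc : ∀ i ∈ D, x i = ζ i
      · by_cases he : Even (hamming x)
        · rw [if_pos hc, if_pos ⟨he, hc⟩, if_pos hc, Even.neg_one_pow he]; ring
        · rw [if_pos hc, if_neg (by tauto), if_pos hc,
            Odd.neg_one_pow (Nat.not_even_iff_odd.mp he)]; ring
      · rw [if_neg hc, if_neg (by tauto), if_neg hc]; ring
    rw [Finset.sum_congr rfl fun x _ => hsplit x] at h2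
    rw [Finset.sum_sub_distrib, ← Finset.mul_sum, Finset.sum_boole, Finset.sum_boole] at h2
    rw [← h1]
    linarith
  -- Step 4: the Gaussian-integer character sum factors
  have h4 := master D ζ (fun i b => ((-1 : GaussianInt))^(if g i b = true then 1 else 0)
      * (⟨0,1⟩ : GaussianInt)^(b.toNat))
  have hprod : ∀ x : Fin n → Bool,
      (∏ i, ((-1 : GaussianInt))^(if g i (x i) = true then 1 else 0)
        * (⟨0,1⟩ : GaussianInt)^((x i).toNat))
      = ((-1 : GaussianInt))^((Finset.univ.filter fun i => g i (x i) = true).card)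
        * (⟨0,1⟩ : GaussianInt)^(hamming x) := by
    intro x
    rw [Finset.prod_mul_distrib, Finset.prod_pow_eq_pow_sum, Finset.prod_pow_eq_pow_sum]
    congr 1
    · congr 1; rw [Finset.card_filter]
    · congr 1
      rw [hamming, Finset.card_filter]
      exact Finset.sum_congr rfl fun i _ => by cases x i <;> rfl
  simp only [hprod] at h4
  -- Step 5: real part of the factored product equals the signed winning sum S
  have hre : ∀ x : Fin n → Bool,
      ((if (∀ i ∈ D, x i = ζ i) then
          ((-1 : GaussianInt))^((Finset.univ.filter fun i => g i (x i) = true).card)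
            * (⟨0,1⟩ : GaussianInt)^(hamming x) else 0)).re
        = (if (Even (hamming x) ∧ ∀ i ∈ D, x i = ζ i) then
            ((-1:ℤ))^((Finset.univ.filter fun i => g i (x i) = true).card)
              * (-1)^(hamming x / 2)
          else 0) := by
    intro x
    by_cases hc : ∀ i ∈ D, x i = ζ i
    · by_cases he : Even (hamming x)
      · rw [if_pos hc, if_pos (⟨he, hc⟩ : Even (hamming x) ∧ ∀ i ∈ D, x i = ζ i),
          neg_one_pow_GI, i_pow, Zsqrtd.re_mul]
        simp [Nat.even_iff.mp he]
      · rw [if_pos hc,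
          if_neg (fun hcon : Even (hamming x) ∧ ∀ i ∈ D, x i = ζ i => he hcon.1),
          neg_one_pow_GI, i_pow, Zsqrtd.re_mul]
        rw [Nat.even_iff] at he
        simp [he]
    · rw [if_neg hc,
        if_neg (fun hcon : Even (hamming x) ∧ ∀ i ∈ D, x i = ζ i => hc hcon.2)]
      simp
  have h5 : (∑ x ∈ (Finset.univ.filter fun x : Fin n → Bool =>
        Even (hamming x) ∧ ∀ i ∈ D, x i = ζ i),
        (((-1:ℤ))^((Finset.univ.filter fun i => g i (x i) = true).card)
          * (-1)^(hamming x / 2)))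
      = (∏ i : Fin n,
          ((if i ∈ D ∧ ¬((false:Bool) = ζ i) then 0
            else ((-1 : GaussianInt))^(if g i false = true then 1 else 0)
              * (⟨0,1⟩ : GaussianInt)^((false:Bool).toNat))
        + (if i ∈ D ∧ ¬((true:Bool) = ζ i) then 0
            else ((-1 : GaussianInt))^(if g i true = true then 1 else 0)
              * (⟨0,1⟩ : GaussianInt)^((true:Bool).toNat)))).re := by
    rw [← h4]
    rw [Finset.sum_filter]
    rw [show (∑ x : Fin n → Bool, (if (∀ i ∈ D, x i = ζ i) then
        ((-1 : GaussianInt))^((Finset.univ.filter fun i => g i (x i) = true).card)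
          * (⟨0,1⟩ : GaussianInt)^(hamming x) else 0)).re
      = ∑ x : Fin n → Bool, ((if (∀ i ∈ D, x i = ζ i) then
        ((-1 : GaussianInt))^((Finset.univ.filter fun i => g i (x i) = true).card)
          * (⟨0,1⟩ : GaussianInt)^(hamming x) else 0)).re from map_sum reHom _ _]
    exact Finset.sum_congr rfl fun x _ => (hre x).symm
  -- Step 6: the product is a unit times (1+i)^m
  set uu : Fin n → GaussianInt := fun i =>
    if g i false = true then (if g i true = true then -1 else ⟨0,1⟩)
    else (if g i true = true then ⟨0,-1⟩ else 1) with huu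
  set FF : Fin n → GaussianInt := fun i =>
      ((if i ∈ D ∧ ¬((false:Bool) = ζ i) then 0
        else ((-1 : GaussianInt))^(if g i false = true then 1 else 0)
          * (⟨0,1⟩ : GaussianInt)^((false:Bool).toNat))
    + (if i ∈ D ∧ ¬((true:Bool) = ζ i) then 0
        else ((-1 : GaussianInt))^(if g i true = true then 1 else 0)
          * (⟨0,1⟩ : GaussianInt)^((true:Bool).toNat))) with hFF
  have hDl1 : ∀ i ∈ D, |(FF i).re| + |(FF i).im| ≤ 1 := by
    intro i hi
    cases hζ : ζ i <;> cases hgf : g i false <;> cases hgt : g i true <;>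
      simp [hFF, hi, hζ, hgf, hgt] <;> decide
  have hcompl : ∀ i ∈ Dᶜ, FF i = uu i * (⟨1,1⟩ : GaussianInt) := by
    intro i hi
    have hi' : i ∉ D := Finset.mem_compl.mp hi
    cases hgf : g i false <;> cases hgt : g i true <;>
      simp [hFF, huu, hi', hgf, hgt] <;> decide
  have hl1uu : ∀ i : Fin n, |(uu i).re| + |(uu i).im| ≤ 1 := by
    intro i
    cases hgf : g i false <;> cases hgt : g i true <;>
      simp [huu, hgf, hgt] <;> decide
  have p1 : ∀ z w : GaussianInt, (|z.re| + |z.im| ≤ 1) → (|w.re| + |w.im| ≤ 1) →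
      |(z*w).re| + |(z*w).im| ≤ 1 := by
    intro z w hz hw
    have h := l1_mul z w
    nlinarith [abs_nonneg (z*w).re, abs_nonneg (z*w).im, abs_nonneg z.re, abs_nonneg z.im,
      abs_nonneg w.re, abs_nonneg w.im]
  have hU : |(((∏ i ∈ D, FF i) * (∏ i ∈ Dᶜ, uu i))).re|
      + |(((∏ i ∈ D, FF i) * (∏ i ∈ Dᶜ, uu i))).im| ≤ 1 := by
    refine p1 _ _ ?_ ?_
    · exact Finset.prod_induction FF (fun z => |z.re| + |z.im| ≤ 1) p1 (by decide) hDl1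
    · exact Finset.prod_induction uu (fun z => |z.re| + |z.im| ≤ 1) p1 (by decide)
        (fun i _ => hl1uu i)
  have hsplitP : (∏ i : Fin n, FF i)
      = ((∏ i ∈ D, FF i) * (∏ i ∈ Dᶜ, uu i)) * (⟨1,1⟩ : GaussianInt)^m := by
    rw [← Finset.prod_mul_prod_compl D FF, Finset.prod_congr rfl hcompl,
      Finset.prod_mul_distrib, Finset.prod_const, hDc]
    ring
  have hSbound : |∑ x ∈ (Finset.univ.filter fun x : Fin n → Bool =>
        Even (hamming x) ∧ ∀ i ∈ D, x i = ζ i),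
        (((-1:ℤ))^((Finset.univ.filter fun i => g i (x i) = true).card)
          * (-1)^(hamming x / 2))| ≤ 2^(m/2) := by
    rw [h5, hsplitP]
    exact (key _ hU m).1
  -- Step 7: the winning count
  have hW2 : 2 * (((Finset.univ.filter fun x : Fin n → Bool =>
        (Even (hamming x) ∧ ∀ i ∈ D, x i = ζ i) ∧
        (Finset.univ.filter fun i => g i (x i) = true).card % 2
          = (hamming x / 2) % 2).card) : ℤ)
      = ((Finset.univ.filter fun x : Fin n → Bool =>
          Even (hamming x) ∧ ∀ i ∈ D, x i = ζ i).card : ℤ)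
        + ∑ x ∈ (Finset.univ.filter fun x : Fin n → Bool =>
            Even (hamming x) ∧ ∀ i ∈ D, x i = ζ i),
          (((-1:ℤ))^((Finset.univ.filter fun i => g i (x i) = true).card)
            * (-1)^(hamming x / 2)) := by
    rw [← Finset.filter_filter]
    calc 2 * (((Finset.univ.filter fun x : Fin n → Bool =>
          Even (hamming x) ∧ ∀ i ∈ D, x i = ζ i).filter fun x =>
            (Finset.univ.filter fun i => g i (x i) = true).card % 2
              = (hamming x / 2) % 2).card : ℤ)
        = ∑ x ∈ (Finset.univ.filter fun x : Fin n → Bool =>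
            Even (hamming x) ∧ ∀ i ∈ D, x i = ζ i),
            (if (Finset.univ.filter fun i => g i (x i) = true).card % 2
              = (hamming x / 2) % 2 then (2:ℤ) else 0) := by
          rw [Finset.sum_ite, Finset.sum_const, Finset.sum_const_zero, add_zero,
            nsmul_eq_mul]
          ring
      _ = ∑ x ∈ (Finset.univ.filter fun x : Fin n → Bool =>
            Even (hamming x) ∧ ∀ i ∈ D, x i = ζ i),
            ((1:ℤ) + ((-1:ℤ))^((Finset.univ.filter fun i => g i (x i) = true).card)
              * (-1)^(hamming x / 2)) :=
          Finset.sum_congr rfl fun x _ => (parity_term _ _).symm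
      _ = _ := by
          rw [Finset.sum_add_distrib, Finset.sum_const, nsmul_eq_mul, mul_one]
  -- Final arithmetic over ℝ
  have hEpos : (0:ℝ) < ((Finset.univ.filter fun x : Fin n → Bool =>
      Even (hamming x) ∧ ∀ i ∈ D, x i = ζ i).card : ℝ) := by
    have h2m : (0:ℤ) < 2^m := by positivity
    have : (0:ℤ) < ((Finset.univ.filter fun x : Fin n → Bool =>
        Even (hamming x) ∧ ∀ i ∈ D, x i = ζ i).card : ℤ) := by linarith
    exact_mod_cast this
  rw [div_le_iff₀ hEpos]
  have hexp : (2:ℝ) ^ (-(((m + 1) / 2 : ℕ) : ℤ)) = (2:ℝ)^(m/2) / (2:ℝ)^m := by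
    have hps : (2:ℝ)^(m/2) * (2:ℝ)^(((m+1)/2 : ℕ)) = 2^m := by rw [← pow_add, hsum2]
    rw [zpow_neg, zpow_natCast, eq_div_iff (ne_of_gt (by positivity : (0:ℝ) < (2:ℝ)^m))]
    rw [← hps, mul_comm ((2:ℝ)^(m/2)) _,
      inv_mul_cancel_left₀ (ne_of_gt (by positivity : (0:ℝ) < (2:ℝ)^(((m+1)/2 : ℕ))))]
  rw [hexp]
  have f3 : 2 * ((Finset.univ.filter fun x : Fin n → Bool =>
      Even (hamming x) ∧ ∀ i ∈ D, x i = ζ i).card : ℝ) = 2^m := by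
    exact_mod_cast h3
  have fS : ((∑ x ∈ (Finset.univ.filter fun x : Fin n → Bool =>
        Even (hamming x) ∧ ∀ i ∈ D, x i = ζ i),
        (((-1:ℤ))^((Finset.univ.filter fun i => g i (x i) = true).card)
          * (-1)^(hamming x / 2))) : ℝ) ≤ (2:ℝ)^(m/2) := by
    have h := le_trans (le_abs_self _) hSbound
    exact_mod_cast h
  have fW : 2 * (((Finset.univ.filter fun x : Fin n → Bool =>
        (Even (hamming x) ∧ ∀ i ∈ D, x i = ζ i) ∧
        (Finset.univ.filter fun i => g i (x i) = true).card % 2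
          = (hamming x / 2) % 2).card) : ℝ)
      = ((Finset.univ.filter fun x : Fin n → Bool =>
          Even (hamming x) ∧ ∀ i ∈ D, x i = ζ i).card : ℝ)
        + ((∑ x ∈ (Finset.univ.filter fun x : Fin n → Bool =>
          Even (hamming x) ∧ ∀ i ∈ D, x i = ζ i),
          (((-1:ℤ))^((Finset.univ.filter fun i => g i (x i) = true).card)
            * (-1)^(hamming x / 2))) : ℝ) := by
    exact_mod_cast hW2
  set Ec : ℝ := ((Finset.univ.filter fun x : Fin n → Bool =>
      Even (hamming x) ∧ ∀ i ∈ D, x i = ζ i).card : ℝ) with hEc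
  have hrhs : (1/2 + (2:ℝ)^(m/2)/(2:ℝ)^m) * Ec = Ec/2 + (2:ℝ)^(m/2)/2 := by
    rw [← f3]
    have hEne : Ec ≠ 0 := ne_of_gt hEpos
    field_simp
  rw [hrhs]
  linarith [fW, fS]
end

section
/- For every n ≥ 1 and every b : Fin n → Bool, the real part of the complex product ∏_{j=1}^{n} (1 + (−1)^{b_j}·i) (where i is the imaginary unit and (−1)^{b_j} means −1 if b_j = true and +1 otherwise) lies in the set {0, 2^{⌊n/2⌋}, −2^{⌊n/2⌋}}. -/
open Complex

lemma aux_pm (n : ℕ) (b : Fin n → Bool) :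
    ∃ z : ℂ, (∏ j, (1 + (if b j then (-1 : ℂ) else 1) * Complex.I)) = 2 ^ (n / 2) * z ∧
      ((n % 2 = 0 ∧ z ∈ ({1, -1, Complex.I, -Complex.I} : Set ℂ)) ∨
       (n % 2 = 1 ∧ z ∈ ({1 + Complex.I, 1 - Complex.I, -1 + Complex.I, -1 - Complex.I} : Set ℂ))) := by
  induction n with
  | zero => exact ⟨1, by simp, Or.inl ⟨rfl, by simp⟩⟩
  | succ n ih =>
    obtain ⟨z, hz, h⟩ := ih (fun j => b j.succ)
    have hprod : (∏ j, (1 + (if b j then (-1 : ℂ) else 1) * Complex.I))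
        = (1 + (if b 0 then (-1 : ℂ) else 1) * Complex.I) * (2 ^ (n / 2) * z) := by
      rw [Fin.prod_univ_succ, hz]
    rcases h with ⟨hp, hm⟩ | ⟨hp, hm⟩
    · -- n even
      have hhalf : (n + 1) / 2 = n / 2 := by omega
      have hpar : (n + 1) % 2 = 1 := by omega
      rw [hhalf]
      simp only [Set.mem_insert_iff, Set.mem_singleton_iff] at hm
      cases hb : b 0 <;> rw [hb] at hprod <;> simp only [if_true, if_false,
        Bool.false_eq_true] at hprod <;> rcases hm with rfl | rfl | rfl | rfl
      · exact ⟨1 + Complex.I, by rw [hprod]; ring,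
          Or.inr ⟨hpar, by norm_num [Set.mem_insert_iff, Complex.ext_iff]⟩⟩
      · exact ⟨-1 - Complex.I, by rw [hprod]; ring,
          Or.inr ⟨hpar, by norm_num [Set.mem_insert_iff, Complex.ext_iff]⟩⟩
      · exact ⟨-1 + Complex.I, by rw [hprod]; linear_combination (2:ℂ)^(n/2) * Complex.I_sq,
          Or.inr ⟨hpar, by norm_num [Set.mem_insert_iff, Complex.ext_iff]⟩⟩
      · exact ⟨1 - Complex.I, by rw [hprod]; linear_combination (-(2:ℂ)^(n/2)) * Complex.I_sq,
          Or.inr ⟨hpar, by norm_num [Set.mem_insert_iff, Complex.ext_iff]⟩⟩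
      · exact ⟨1 - Complex.I, by rw [hprod]; ring,
          Or.inr ⟨hpar, by norm_num [Set.mem_insert_iff, Complex.ext_iff]⟩⟩
      · exact ⟨-1 + Complex.I, by rw [hprod]; ring,
          Or.inr ⟨hpar, by norm_num [Set.mem_insert_iff, Complex.ext_iff]⟩⟩
      · exact ⟨1 + Complex.I, by rw [hprod]; linear_combination (-(2:ℂ)^(n/2)) * Complex.I_sq,
          Or.inr ⟨hpar, by norm_num [Set.mem_insert_iff, Complex.ext_iff]⟩⟩
      · exact ⟨-1 - Complex.I, by rw [hprod]; linear_combination (2:ℂ)^(n/2) * Complex.I_sq,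
          Or.inr ⟨hpar, by norm_num [Set.mem_insert_iff, Complex.ext_iff]⟩⟩
    · -- n odd
      have hhalf : (n + 1) / 2 = n / 2 + 1 := by omega
      have hpar : (n + 1) % 2 = 0 := by omega
      rw [hhalf]
      simp only [pow_succ]
      simp only [Set.mem_insert_iff, Set.mem_singleton_iff] at hm
      cases hb : b 0 <;> rw [hb] at hprod <;> simp only [if_true, if_false,
        Bool.false_eq_true] at hprod <;> rcases hm with rfl | rfl | rfl | rfl
      · exact ⟨Complex.I, by rw [hprod]; linear_combination (2:ℂ)^(n/2) * Complex.I_sq,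
          Or.inl ⟨hpar, by norm_num [Set.mem_insert_iff, Complex.ext_iff]⟩⟩
      · exact ⟨1, by rw [hprod]; linear_combination (-(2:ℂ)^(n/2)) * Complex.I_sq,
          Or.inl ⟨hpar, by norm_num [Set.mem_insert_iff, Complex.ext_iff]⟩⟩
      · exact ⟨-1, by rw [hprod]; linear_combination (2:ℂ)^(n/2) * Complex.I_sq,
          Or.inl ⟨hpar, by norm_num [Set.mem_insert_iff, Complex.ext_iff]⟩⟩
      · exact ⟨-Complex.I, by rw [hprod]; linear_combination (-(2:ℂ)^(n/2)) * Complex.I_sq,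
          Or.inl ⟨hpar, by norm_num [Set.mem_insert_iff, Complex.ext_iff]⟩⟩
      · exact ⟨1, by rw [hprod]; linear_combination (-(2:ℂ)^(n/2)) * Complex.I_sq,
          Or.inl ⟨hpar, by norm_num [Set.mem_insert_iff, Complex.ext_iff]⟩⟩
      · exact ⟨-Complex.I, by rw [hprod]; linear_combination (2:ℂ)^(n/2) * Complex.I_sq,
          Or.inl ⟨hpar, by norm_num [Set.mem_insert_iff, Complex.ext_iff]⟩⟩
      · exact ⟨Complex.I, by rw [hprod]; linear_combination (-(2:ℂ)^(n/2)) * Complex.I_sq,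
          Or.inl ⟨hpar, by norm_num [Set.mem_insert_iff, Complex.ext_iff]⟩⟩
      · exact ⟨-1, by rw [hprod]; linear_combination (2:ℂ)^(n/2) * Complex.I_sq,
          Or.inl ⟨hpar, by norm_num [Set.mem_insert_iff, Complex.ext_iff]⟩⟩

/-- The real part of `∏ j, (1 + (−1)^{b j}·i)` lies in `{0, 2^⌊n/2⌋, −2^⌊n/2⌋}`. -/
theorem re_prod_one_add_pm_I (n : ℕ) (hn : 1 ≤ n) (b : Fin n → Bool) :
    (∏ j, (1 + (if b j then (-1 : ℂ) else 1) * Complex.I)).re ∈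
      ({0, (2 : ℝ) ^ (n / 2), -(2 : ℝ) ^ (n / 2)} : Set ℝ) := by
  obtain ⟨z, hz, h⟩ := aux_pm n b
  have h2 : ((2 : ℂ) ^ (n / 2)) = (((2 : ℝ) ^ (n / 2) : ℝ) : ℂ) := by push_cast; ring
  have hre : (∏ j, (1 + (if b j then (-1 : ℂ) else 1) * Complex.I)).re
      = (2 : ℝ) ^ (n / 2) * z.re := by
    rw [hz, h2, Complex.re_ofReal_mul]
  rw [hre]
  rcases h with ⟨_, hm⟩ | ⟨_, hm⟩ <;>
    simp only [Set.mem_insert_iff, Set.mem_singleton_iff] at hm ⊢ <;>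
    rcases hm with rfl | rfl | rfl | rfl <;> simp
end

section
/- Let n ≥ 1 and ℓ, m be natural numbers, and let L : Fin m → Finset (Fin n) be an assignment of 'light cones' with |L(j)| ≤ ℓ for every j. Then there exists a set S ⊆ Fin n with |S| ≥ n² / (n + ℓ²·m) (as real numbers) such that for every j ∈ Fin m, the intersection L(j) ∩ S has at most one element. -/
open Finset

/-- Numeric core of the Turán-type greedy argument. -/
lemma turan_numeric (t k s A : ℝ) (hk : 1 ≤ k) (htk : k ≤ t)
    (hA : k ^ 2 + (t - k) ≤ A) (hs : 0 ≤ s)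
    (h1 : (t - k) ^ 2 ≤ s * (A - k ^ 2)) : t ^ 2 ≤ (s + 1) * A := by
  rcases eq_or_lt_of_le (by linarith : (0:ℝ) ≤ A - k ^ 2) with hB | hB
  · have ht : t = k := by nlinarith
    nlinarith
  · nlinarith [sq_nonneg (A - t * k), mul_le_mul_of_nonneg_right h1 (le_of_lt hB),
      mul_pos hB hB]

/-- Greedy/Turán independent-set lemma over `Fin n`. -/
lemma turan_indep (n : ℕ) (Adj : Fin n → Fin n → Prop) [DecidableRel Adj]
    (hsymm : ∀ u v, Adj u v → Adj v u) (T : Finset (Fin n)) :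
    ∃ S ⊆ T, (∀ u ∈ S, ∀ v ∈ S, u ≠ v → ¬ Adj u v) ∧
      (T.card : ℝ) ^ 2 ≤ S.card *
        (T.card + ∑ v ∈ T, (((T.erase v).filter (Adj v)).card : ℝ)) := by
  induction T using Finset.strongInduction with
  | _ T ih =>
    rcases T.eq_empty_or_nonempty with rfl | hTne
    · exact ⟨∅, Subset.rfl, by simp, by simp⟩
    obtain ⟨v, hvT, hvmin⟩ := T.exists_min_image
      (fun v => ((T.erase v).filter (Adj v)).card) hTne
    set d : ℕ := ((T.erase v).filter (Adj v)).card with hd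
    set N : Finset (Fin n) := insert v ((T.erase v).filter (Adj v)) with hN
    have hvnot : v ∉ (T.erase v).filter (Adj v) := fun h =>
      (mem_erase.1 (mem_filter.1 h).1).1 rfl
    have hNcard : N.card = d + 1 := by
      rw [hN, card_insert_of_notMem hvnot]
    have hNT : N ⊆ T := by
      rw [hN]; exact insert_subset hvT ((filter_subset _ _).trans (erase_subset _ _))
    have hvN : v ∈ N := mem_insert_self _ _
    set T' : Finset (Fin n) := T \ N with hT'
    have hT'ss : T' ⊂ T := sdiff_ssubset hNT ⟨v, hvN⟩
    obtain ⟨S', hS'T', hS'ind, hS'card⟩ := ih T' hT'ss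
    have hvS' : v ∉ S' := fun h => (mem_sdiff.1 (hS'T' h)).2 hvN
    refine ⟨insert v S', insert_subset hvT (hS'T'.trans (sdiff_subset)), ?_, ?_⟩
    · -- independence
      have hadjN : ∀ u ∈ T, u ≠ v → Adj v u → u ∈ N := by
        intro u huT huv hadj
        exact mem_insert_of_mem (mem_filter.2 ⟨mem_erase.2 ⟨huv, huT⟩, hadj⟩)
      intro a ha b hb hab
      rcases mem_insert.1 ha with rfl | ha' <;> rcases mem_insert.1 hb with rfl | hb'
      · exact absurd rfl hab
      · intro h
        have hbT' := hS'T' hb'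
        exact (mem_sdiff.1 hbT').2 (hadjN b (mem_sdiff.1 hbT').1 (fun e => hab e.symm) h)
      · intro h
        have haT' := hS'T' ha'
        exact (mem_sdiff.1 haT').2 (hadjN a (mem_sdiff.1 haT').1 hab (hsymm _ _ h))
      · exact hS'ind a ha' b hb' hab
    · -- cardinality
      have hcardT' : T'.card = T.card - N.card := card_sdiff_of_subset hNT
      have hkT : N.card ≤ T.card := card_le_card hNT
      -- degree monotone
      have hdegmono : ∀ u, ((T'.erase u).filter (Adj u)).card ≤
          ((T.erase u).filter (Adj u)).card := by
        intro u
        exact card_le_card (filter_subset_filter _ (erase_subset_erase _ sdiff_subset))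
      -- sum split
      have hsplit : ∑ u ∈ T', ((T.erase u).filter (Adj u)).card
            + ∑ u ∈ N, ((T.erase u).filter (Adj u)).card
          = ∑ u ∈ T, ((T.erase u).filter (Adj u)).card := by
        rw [hT']; exact sum_sdiff hNT
      have hmin : ∀ u ∈ N, d ≤ ((T.erase u).filter (Adj u)).card := fun u hu =>
        hvmin u (hNT hu)
      have hNsum : N.card * d ≤ ∑ u ∈ N, ((T.erase u).filter (Adj u)).card := by
        calc N.card * d = ∑ _u ∈ N, d := by rw [sum_const, smul_eq_mul]
        _ ≤ _ := sum_le_sum hmin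
      have hW' : ∑ u ∈ T', ((T'.erase u).filter (Adj u)).card
          ≤ ∑ u ∈ T', ((T.erase u).filter (Adj u)).card :=
        sum_le_sum fun u _ => hdegmono u
      -- pass to reals
      set W : ℕ := ∑ u ∈ T, ((T.erase u).filter (Adj u)).card with hWdef
      set W' : ℕ := ∑ u ∈ T', ((T'.erase u).filter (Adj u)).card with hW'def
      have hWsum : (∑ v ∈ T, (((T.erase v).filter (Adj v)).card : ℝ)) = (W : ℝ) := by
        rw [hWdef]; push_cast; ring
      have hW'sum : (∑ v ∈ T', (((T'.erase v).filter (Adj v)).card : ℝ)) = (W' : ℝ) := by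
        rw [hW'def]; push_cast; ring
      rw [hWsum]
      rw [hW'sum] at hS'card
      have hcards : ((insert v S').card : ℝ) = (S'.card : ℝ) + 1 := by
        rw [card_insert_of_notMem hvS']; push_cast; ring
      have ht' : (T'.card : ℝ) = (T.card : ℝ) - (N.card : ℝ) := by
        rw [hcardT', Nat.cast_sub hkT]
      have hWW' : (W' : ℝ) + N.card * d ≤ (W : ℝ) := by
        have : W' + N.card * d ≤ W := by
          calc W' + N.card * d ≤ (∑ u ∈ T', ((T.erase u).filter (Adj u)).card)
                + ∑ u ∈ N, ((T.erase u).filter (Adj u)).card :=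
            Nat.add_le_add hW' hNsum
          _ = W := hsplit
        exact_mod_cast this
      rw [hcards]
      apply turan_numeric (T.card : ℝ) (N.card : ℝ) (S'.card : ℝ)
        ((T.card : ℝ) + W)
      · exact_mod_cast Nat.one_le_iff_ne_zero.2 (by positivity)
      · exact_mod_cast hkT
      · have : ((N.card : ℝ)) ^ 2 = N.card * d + N.card := by
          rw [hNcard]; push_cast; ring
        nlinarith [hWW']
      · positivity
      · calc ((T.card : ℝ) - N.card) ^ 2 = ((T'.card : ℝ)) ^ 2 := by rw [ht']
        _ ≤ S'.card * ((T'.card : ℝ) + W') := hS'card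
        _ ≤ S'.card * ((T.card : ℝ) + W - (N.card : ℝ) ^ 2) := by
            apply mul_le_mul_of_nonneg_left _ (by positivity)
            have : ((N.card : ℝ)) ^ 2 = N.card * d + N.card := by
              rw [hNcard]; push_cast; ring
            rw [ht']
            nlinarith [hWW']

/-- Combinatorial core of the light-cone argument: given `m` light cones of size at most `ℓ`
over `n` inputs, there is a set `S` of at least `n²/(n + ℓ²·m)` inputs such that every light
cone meets `S` in at most one element. -/
theorem exists_scattered_set (n m ℓ : ℕ) (hn : 1 ≤ n)
    (L : Fin m → Finset (Fin n)) (hL : ∀ j, (L j).card ≤ ℓ) :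
    ∃ S : Finset (Fin n),
      (n : ℝ) ^ 2 / ((n : ℝ) + (ℓ : ℝ) ^ 2 * (m : ℝ)) ≤ (S.card : ℝ) ∧
      ∀ j, (L j ∩ S).card ≤ 1 := by
  set Adj : Fin n → Fin n → Prop := fun u v => ∃ j, u ∈ L j ∧ v ∈ L j with hAdj
  haveI : DecidableRel Adj := fun u v => Fintype.decidableExistsFintype
  obtain ⟨S, hST, hind, hcard⟩ := turan_indep n Adj
    (fun u v ⟨j, h1, h2⟩ => ⟨j, h2, h1⟩) Finset.univ
  -- bound on total degree sum
  have hdeg : ∀ v : Fin n, (((Finset.univ.erase v).filter (Adj v)).card : ℕ)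
      ≤ ∑ j : Fin m, if v ∈ L j then ℓ - 1 else 0 := by
    intro v
    have hsub : (Finset.univ.erase v).filter (Adj v) ⊆
        (Finset.univ.filter (fun j => v ∈ L j)).biUnion (fun j => (L j).erase v) := by
      intro u hu
      obtain ⟨hu1, j, hvj, huj⟩ := Finset.mem_filter.1 hu
      exact Finset.mem_biUnion.2 ⟨j, Finset.mem_filter.2 ⟨Finset.mem_univ _, hvj⟩,
        Finset.mem_erase.2 ⟨(Finset.mem_erase.1 hu1).1, huj⟩⟩
    calc _ ≤ _ := Finset.card_le_card hsub
    _ ≤ ∑ j ∈ Finset.univ.filter (fun j => v ∈ L j), ((L j).erase v).card :=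
        Finset.card_biUnion_le
    _ ≤ ∑ j ∈ Finset.univ.filter (fun j => v ∈ L j), (ℓ - 1) := by
        apply Finset.sum_le_sum
        intro j hj
        rw [Finset.card_erase_of_mem (Finset.mem_filter.1 hj).2]
        exact Nat.sub_le_sub_right (hL j) 1
    _ = ∑ j : Fin m, if v ∈ L j then ℓ - 1 else 0 := (Finset.sum_filter _ _)
  have hWbound : ∑ v : Fin n, (((Finset.univ.erase v).filter (Adj v)).card : ℕ)
      ≤ ℓ ^ 2 * m := by
    calc _ ≤ ∑ v : Fin n, ∑ j : Fin m, if v ∈ L j then ℓ - 1 else 0 :=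
          Finset.sum_le_sum fun v _ => hdeg v
    _ = ∑ j : Fin m, ∑ v : Fin n, if v ∈ L j then ℓ - 1 else 0 := Finset.sum_comm
    _ = ∑ j : Fin m, (L j).card * (ℓ - 1) := by
        apply Finset.sum_congr rfl
        intro j _
        rw [Finset.sum_ite_mem, Finset.univ_inter, Finset.sum_const, smul_eq_mul]
    _ ≤ ∑ _j : Fin m, ℓ * ℓ := Finset.sum_le_sum fun j _ =>
        Nat.mul_le_mul (hL j) (Nat.sub_le _ _)
    _ = ℓ ^ 2 * m := by simp [Finset.sum_const, pow_two]; ring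
  have hcardu : (Finset.univ : Finset (Fin n)).card = n := by simp
  refine ⟨S, ?_, ?_⟩
  · have hpos : (0:ℝ) < (n : ℝ) + (ℓ : ℝ) ^ 2 * m := by
      have h1 : (1:ℝ) ≤ (n:ℝ) := by exact_mod_cast hn
      positivity
    rw [div_le_iff₀ hpos]
    rw [hcardu] at hcard
    refine hcard.trans ?_
    have hWr : (∑ v : Fin n,
        (((Finset.univ.erase v).filter (Adj v)).card : ℝ)) ≤ (ℓ:ℝ) ^ 2 * m := by
      calc (∑ v : Fin n, (((Finset.univ.erase v).filter (Adj v)).card : ℝ))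
          = ((∑ v : Fin n, ((Finset.univ.erase v).filter (Adj v)).card : ℕ) : ℝ) := by
            push_cast; ring
      _ ≤ ((ℓ ^ 2 * m : ℕ) : ℝ) := by exact_mod_cast hWbound
      _ = (ℓ:ℝ) ^ 2 * m := by push_cast; ring
    have hS0 : (0:ℝ) ≤ (S.card : ℝ) := by positivity
    nlinarith [hWr, hS0]
  · intro j
    rw [Finset.card_le_one]
    intro a ha b hb
    by_contra hab
    exact hind a (Finset.mem_inter.1 ha).2 b (Finset.mem_inter.1 hb).2 hab
      ⟨j, (Finset.mem_inter.1 ha).1, (Finset.mem_inter.1 hb).1⟩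
end

section
/- NC⁰ lower bound for the Parity Halving Problem: let n ≥ 1, and let F : (Fin n → Bool) → (Fin m → Bool) have locality ℓ, meaning that for every output index j there is a set T_j ⊆ Fin n with |T_j| ≤ ℓ such that F(x)(j) depends only on the restriction of x to T_j (i.e., if x and x' agree on T_j then F(x)(j) = F(x')(j)). Then the fraction of even-Hamming-weight strings x : Fin n → Bool for which the Hamming weight of F(x) satisfies |F(x)| ≡ |x|/2 (mod 2) is at most 1/2 + 2^{−n²/(2(n + ℓ²·m))}. -/
open Finset Complex

namespace SimpleGraph

variable {V : Type*} [Fintype V] [DecidableEq V] (G : SimpleGraph V) [DecidableRel G.Adj]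

theorem exists_isIndepSet_subset_sum_inv_le (U : Finset V) :
    ∃ S ⊆ U, G.IsIndepSet S ∧
      ∑ v ∈ U, (1 : ℝ) / (#(G.neighborFinset v ∩ U) + 1) ≤ #S := by
  induction U using Finset.strongInduction with
  | _ U ih =>
  obtain rfl | hU := U.eq_empty_or_nonempty
  · exact ⟨∅, Subset.rfl, by simp, by simp⟩
  -- Keep a vertex `v` of minimal degree in `U`; its closed neighbourhood contributes at most 1.
  obtain ⟨v, hvU, hv_min⟩ := U.exists_min_image (fun w => #(G.neighborFinset w ∩ U)) hU
  set U' := U.filter fun w => ¬(w = v ∨ G.Adj v w)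
  have hU' : U' ⊂ U := filter_ssubset.2 ⟨v, hvU, by simp⟩
  obtain ⟨S', hS'U', hS'_indep, hS'_sum⟩ := ih U' hU'
  have hvS' : v ∉ S' := fun h => by simpa [U'] using hS'U' h
  refine ⟨insert v S', insert_subset hvU (hS'U'.trans (filter_subset _ _)), ?_, ?_⟩
  · rw [coe_insert]
    refine hS'_indep.insert fun w hw _ => ?_
    have hvw : ¬G.Adj v w := (not_or.1 (mem_filter.1 (hS'U' hw)).2).2
    exact ⟨hvw, fun h => hvw h.symm⟩
  have h_near : ∑ w ∈ U.filter fun w => w = v ∨ G.Adj v w,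
      (1 : ℝ) / (#(G.neighborFinset w ∩ U) + 1) ≤ 1 := by
    have hcard : #(U.filter fun w => w = v ∨ G.Adj v w) ≤ #(G.neighborFinset v ∩ U) + 1 := by
      refine (card_le_card fun w hw => ?_).trans (card_insert_le v _)
      simp only [mem_filter] at hw
      rcases hw with ⟨hwU, rfl | hvw⟩
      · exact mem_insert_self _ _
      · exact mem_insert_of_mem (mem_inter.2 ⟨(G.mem_neighborFinset _ _).2 hvw, hwU⟩)
    calc _ ≤ ∑ _w ∈ U.filter fun w => w = v ∨ G.Adj v w,
            (1 : ℝ) / (#(G.neighborFinset v ∩ U) + 1) :=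
          sum_le_sum fun w hw => one_div_le_one_div_of_le (by positivity)
            (by exact_mod_cast Nat.add_le_add_right (hv_min w (mem_of_mem_filter w hw)) 1)
      _ ≤ 1 := by
          rw [sum_const, nsmul_eq_mul, mul_one_div, div_le_one (by positivity)]
          exact_mod_cast hcard
  have h_far : ∑ w ∈ U', (1 : ℝ) / (#(G.neighborFinset w ∩ U) + 1) ≤ #S' :=
    (sum_le_sum fun w _ => by gcongr).trans hS'_sum
  rw [← sum_filter_add_sum_filter_not U (fun w => w = v ∨ G.Adj v w), card_insert_of_notMem hvS']
  push_cast
  linarith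

theorem exists_isIndepSet_sum_inv_degree_le :
    ∃ S : Finset V, G.IsIndepSet S ∧ ∑ v, (1 : ℝ) / (G.degree v + 1) ≤ #S := by
  obtain ⟨S, -, hS, hsum⟩ := G.exists_isIndepSet_subset_sum_inv_le univ
  exact ⟨S, hS, by simpa using hsum⟩

theorem exists_isIndepSet_sq_card_le :
    ∃ S : Finset V, G.IsIndepSet S ∧
      (Fintype.card V : ℝ) ^ 2 ≤ #S * (Fintype.card V + ∑ v, G.degree v) := by
  obtain ⟨S, hS, hsum⟩ := G.exists_isIndepSet_sum_inv_degree_le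
  refine ⟨S, hS, ?_⟩
  have hpos : ∀ v, (0 : ℝ) < G.degree v + 1 := fun v => by positivity
  calc (Fintype.card V : ℝ) ^ 2 = (∑ _v : V, (1 : ℝ)) ^ 2 := by simp
    _ ≤ (∑ v, (1 : ℝ) / (G.degree v + 1)) * ∑ v, ((G.degree v : ℝ) + 1) :=
        sum_sq_le_sum_mul_sum_of_sq_le_mul _ (fun v _ => by positivity) (fun v _ => by positivity)
          fun v _ => by rw [one_div_mul_cancel (hpos v).ne']; norm_num
    _ ≤ #S * ∑ v, ((G.degree v : ℝ) + 1) := by gcongr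
    _ = #S * (Fintype.card V + ∑ v, G.degree v) := by
        rw [sum_add_distrib]; push_cast; simp [add_comm]

end SimpleGraph

section DependencyGraph

variable {ι κ : Type*}

def dependencyGraph (T : κ → Finset ι) : SimpleGraph ι :=
  SimpleGraph.fromRel fun i i' => ∃ j, i ∈ T j ∧ i' ∈ T j

theorem card_inter_le_one_of_isIndepSet [DecidableEq ι] {T : κ → Finset ι} {S : Finset ι}
    (hS : (dependencyGraph T).IsIndepSet S) (j : κ) : #(T j ∩ S) ≤ 1 := by
  refine card_le_one.2 fun i hi i' hi' => ?_
  rw [mem_inter] at hi hi'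
  by_contra hne
  exact hS hi.2 hi'.2 hne ⟨hne, Or.inl ⟨j, hi.1, hi'.1⟩⟩

theorem sum_degree_dependencyGraph_le [DecidableEq ι] [Fintype ι] [Fintype κ] (T : κ → Finset ι)
    [DecidableRel (dependencyGraph T).Adj] :
    ∑ i, (dependencyGraph T).degree i ≤ ∑ j, #(T j) ^ 2 := by
  have hdeg : ∀ i, (dependencyGraph T).degree i ≤ ∑ j, if i ∈ T j then #(T j) else 0 := by
    intro i
    rw [← SimpleGraph.card_neighborFinset_eq_degree, ← sum_filter]
    refine (card_le_card fun i' hi' => ?_).trans card_biUnion_le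
    obtain ⟨-, ⟨j, hij, hi'j⟩ | ⟨j, hi'j, hij⟩⟩ := (SimpleGraph.mem_neighborFinset _ _ _).1 hi'
    all_goals exact mem_biUnion.2 ⟨j, mem_filter.2 ⟨mem_univ j, hij⟩, hi'j⟩
  calc ∑ i, (dependencyGraph T).degree i
      ≤ ∑ i, ∑ j, if i ∈ T j then #(T j) else 0 := sum_le_sum fun i _ => hdeg i
    _ = ∑ j, #(T j) ^ 2 := by
        rw [sum_comm]
        refine sum_congr rfl fun j _ => ?_
        rw [sum_ite_mem, univ_inter, sum_const, smul_eq_mul, sq]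

theorem exists_card_inter_le_one_and_sq_card_le [DecidableEq ι] [Fintype ι] [Fintype κ]
    (T : κ → Finset ι) {ℓ : ℕ} (hT : ∀ j, #(T j) ≤ ℓ) :
    ∃ S : Finset ι, (∀ j, #(T j ∩ S) ≤ 1) ∧
      (Fintype.card ι : ℝ) ^ 2 ≤ #S * (Fintype.card ι + ℓ ^ 2 * Fintype.card κ) := by
  classical
  obtain ⟨S, hS, hcard⟩ := (dependencyGraph T).exists_isIndepSet_sq_card_le
  refine ⟨S, card_inter_le_one_of_isIndepSet hS, hcard.trans ?_⟩
  have hdeg : ∑ i, (dependencyGraph T).degree i ≤ ℓ ^ 2 * Fintype.card κ :=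
    calc _ ≤ ∑ j, #(T j) ^ 2 := sum_degree_dependencyGraph_le T
      _ ≤ ∑ _j : κ, ℓ ^ 2 := sum_le_sum fun j _ => Nat.pow_le_pow_left (hT j) 2
      _ = ℓ ^ 2 * Fintype.card κ := by rw [sum_const, card_univ, smul_eq_mul, mul_comm]
  gcongr
  exact_mod_cast hdeg

end DependencyGraph

section ScaledCharacter

variable {σ : Type*} [Fintype σ]

def IsScaledCharacter (g : (σ → Bool) → ℂ) : Prop :=
  ∃ c : ℂ, ∃ a : σ → ℂ, ‖c‖ = 1 ∧ (∀ s, a s = 1 ∨ a s = -1) ∧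
    ∀ y, g y = c * ∏ s, if y s then a s else 1

theorem mul_eq_one_or_neg_one {R : Type*} [Ring R] {a b : R} (ha : a = 1 ∨ a = -1)
    (hb : b = 1 ∨ b = -1) :
    a * b = 1 ∨ a * b = -1 := by
  rcases ha with rfl | rfl <;> rcases hb with rfl | rfl <;> norm_num

theorem IsScaledCharacter.mul {g h : (σ → Bool) → ℂ} (hg : IsScaledCharacter g)
    (hh : IsScaledCharacter h) : IsScaledCharacter (g * h) := by
  obtain ⟨c, a, hc, ha, hg⟩ := hg
  obtain ⟨c', a', hc', ha', hh⟩ := hh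
  refine ⟨c * c', a * a', by rw [norm_mul, hc, hc', one_mul],
    fun s => mul_eq_one_or_neg_one (ha s) (ha' s), fun y => ?_⟩
  rw [Pi.mul_apply, hg, hh, mul_mul_mul_comm, ← prod_mul_distrib]
  congr 1
  exact prod_congr rfl fun s _ => by cases y s <;> simp

theorem isScaledCharacter_one : IsScaledCharacter (1 : (σ → Bool) → ℂ) :=
  ⟨1, 1, norm_one, fun _ => Or.inl rfl, fun y => by simp⟩

theorem isScaledCharacter_prod {κ : Type*} (t : Finset κ) {g : κ → (σ → Bool) → ℂ}
    (hg : ∀ j ∈ t, IsScaledCharacter (g j)) : IsScaledCharacter fun y => ∏ j ∈ t, g j y := by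
  rw [← prod_fn]
  exact prod_induction g _ (fun _ _ => IsScaledCharacter.mul) isScaledCharacter_one hg

theorem isScaledCharacter_of_dependsOn [DecidableEq σ] {g : (σ → Bool) → ℂ}
    (hg : ∀ y, g y = 1 ∨ g y = -1) {U : Finset σ} (hU : #U ≤ 1) (hdep : DependsOn g U) :
    IsScaledCharacter g := by
  set y₀ : σ → Bool := fun _ => false
  have hc : ‖g y₀‖ = 1 := by rcases hg y₀ with h | h <;> simp [h]
  obtain hU | hU := Nat.le_one_iff_eq_zero_or_eq_one.1 hU
  · obtain rfl := card_eq_zero.1 hU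
    rw [coe_empty] at hdep
    exact ⟨g y₀, 1, hc, fun _ => Or.inl rfl, fun y => by simp [hdep.empty y y₀]⟩
  obtain ⟨t, rfl⟩ := card_eq_one.1 hU
  set b := g (fun s => decide (s = t)) * g y₀
  refine ⟨g y₀, fun s => if s = t then b else 1, hc, fun s => ?_, fun y => ?_⟩
  · dsimp only
    split_ifs
    exacts [mul_eq_one_or_neg_one (hg _) (hg y₀), Or.inl rfl]
  have hprod : (∏ s, if y s then (if s = t then b else 1) else 1) = if y t then b else 1 := by
    rw [prod_eq_single t (fun s _ hst => by simp [hst]) (by simp)]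
    simp
  rw [hprod]
  cases hyt : y t
  · rw [if_neg Bool.false_ne_true, mul_one]
    exact hdep fun i hi => by simp_all [y₀]
  · have hy₀ : g y₀ * g y₀ = 1 := by rcases hg y₀ with h | h <;> rw [h] <;> norm_num
    rw [if_pos rfl, mul_left_comm, hy₀, mul_one]
    exact hdep fun i hi => by simp_all

theorem norm_sum_mul_prod_I_eq [DecidableEq σ] {g : (σ → Bool) → ℂ} (hg : IsScaledCharacter g) :
    ‖∑ y, g y * ∏ s, if y s then I else 1‖ = √2 ^ Fintype.card σ := by
  obtain ⟨c, a, hc, ha, hg⟩ := hg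
  have hterm : ∀ y : σ → Bool,
      g y * ∏ s, (if y s then I else 1) = c * ∏ s, if y s then a s * I else 1 := fun y => by
    rw [hg, mul_assoc, ← prod_mul_distrib]
    congr 1
    exact prod_congr rfl fun s _ => by split_ifs <;> simp
  have hnorm : ∀ s, ‖a s * I + 1‖ = √2 := fun s => by
    rcases ha s with h | h <;> simp [h, Complex.norm_def, Complex.normSq_apply] <;> norm_num
  simp_rw [hterm, ← mul_sum]
  rw [← Fintype.prod_sum (fun s (b : Bool) => if b then a s * I else 1)]
  simp [norm_prod, hc, hnorm]

end ScaledCharacter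

theorem DependsOn.comp_piEquivPiSubtypeProd_symm {ι β : Type*} {α : ι → Type*} {p : ι → Prop}
    [DecidablePred p] {f : (∀ i, α i) → β} {T : Finset ι} (hf : DependsOn f T)
    (z : ∀ i : {i // ¬p i}, α i) :
    DependsOn (fun y => f ((Equiv.piEquivPiSubtypeProd p α).symm (y, z))) (T.subtype p) := by
  intro y y' hyy'
  refine hf fun i hi => ?_
  by_cases hpi : p i
  · simpa [hpi] using hyy' ⟨i, hpi⟩ (by simpa using hi)
  · simp [hpi]

section Restriction

variable {σ : Type*} [Fintype σ] [DecidableEq σ]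

theorem norm_sum_mul_prod_I_le (S : Finset σ) (g : (σ → Bool) → ℂ)
    (hg : ∀ z : {i // i ∉ S} → Bool,
      IsScaledCharacter fun y => g ((Equiv.piEquivPiSubtypeProd (· ∈ S) _).symm (y, z))) :
    ‖∑ x, g x * ∏ i, if x i then I else 1‖ ≤ 2 ^ (Fintype.card σ - #S) * √2 ^ #S := by
  set e := Equiv.piEquivPiSubtypeProd (· ∈ S) fun _ => Bool
  have hweight : ∀ y z, (∏ i, if e.symm (y, z) i then I else 1) =
      (∏ s : S, if y s then I else 1) * ∏ i : {i // i ∉ S}, if z i then I else 1 := by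
    intro y z
    rw [← Fintype.prod_subtype_mul_prod_subtype (· ∈ S)]
    congr 1
    · exact Finset.prod_congr (by congr; exact Subsingleton.elim _ _) fun i _ => by simp [e]
    · exact Fintype.prod_congr _ _ fun i => by simp [e, i.2]
  have hinner : ∀ z : {i // i ∉ S} → Bool,
      ‖∑ y, g (e.symm (y, z)) * ∏ i, if e.symm (y, z) i then I else 1‖ = √2 ^ #S := by
    intro z
    simp_rw [hweight, ← mul_assoc, ← sum_mul, norm_mul, norm_prod,
      norm_sum_mul_prod_I_eq (hg z), Fintype.card_coe]
    simp [apply_ite]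
  calc ‖∑ x, g x * ∏ i, if x i then I else 1‖
      = ‖∑ z, ∑ y, g (e.symm (y, z)) * ∏ i, if e.symm (y, z) i then I else 1‖ := by
        rw [← e.symm.sum_comp, Fintype.sum_prod_type, sum_comm]
    _ ≤ ∑ z : {i // i ∉ S} → Bool, √2 ^ #S :=
        (norm_sum_le _ _).trans (sum_le_sum fun z _ => (hinner z).le)
    _ = 2 ^ (Fintype.card σ - #S) * √2 ^ #S := by
        simp [Fintype.card_subtype_compl]

end Restriction

theorem pow_card_filter_eq_prod {ι M : Type*} [Fintype ι] [CommMonoid M] (a : M) (p : ι → Prop)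
    [DecidablePred p] : a ^ #{i | p i} = ∏ i, if p i then a else 1 := by
  rw [prod_ite, prod_const, prod_const_one, mul_one]

section ParityHalving

variable {n m : ℕ}

def parityHalvingSum (F : (Fin n → Bool) → Fin m → Bool) : ℂ :=
  ∑ x, (-1) ^ #{j | F x j = true} * I ^ hamming x

theorem norm_parityHalvingSum_le {F : (Fin n → Bool) → Fin m → Bool} {T : Fin m → Finset (Fin n)}
    (hT : ∀ j, DependsOn (F · j) (T j)) {S : Finset (Fin n)} (hS : ∀ j, #(T j ∩ S) ≤ 1) :
    ‖parityHalvingSum F‖ ≤ 2 ^ (n - #S) * √2 ^ #S := by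
  have hsum : parityHalvingSum F =
      ∑ x, (∏ j, if F x j then -1 else 1) * ∏ i, if x i then I else 1 := by
    simp only [parityHalvingSum, hamming, pow_card_filter_eq_prod]
  rw [hsum]
  refine (norm_sum_mul_prod_I_le S _ fun z => ?_).trans_eq (by rw [Fintype.card_fin])
  refine isScaledCharacter_prod _ fun j _ => isScaledCharacter_of_dependsOn
    (fun y => by split_ifs <;> simp) (U := (T j).subtype (· ∈ S)) ?_ ?_
  · rw [card_subtype, filter_mem_eq_inter]
    exact hS j
  · exact fun y y' h =>
      congrArg (if · then (-1 : ℂ) else 1) ((hT j).comp_piEquivPiSubtypeProd_symm z h)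

theorem re_neg_one_pow_mul_I_pow (c h : ℕ) :
    ((-1 : ℂ) ^ c * I ^ h).re =
      2 * (if Even h ∧ c % 2 = h / 2 % 2 then 1 else 0) - (if Even h then 1 else 0) := by
  have hsign : ∀ q, (-1 : ℂ) ^ c * (-1) ^ q = ((-1 : ℝ) ^ (c + q) : ℝ) := fun q => by
    push_cast; ring
  obtain ⟨q, rfl | rfl⟩ := Nat.even_or_odd' h
  · have hpar : c % 2 = q % 2 ↔ Even (c + q) := by rw [Nat.even_iff]; omega
    rw [pow_mul, I_sq, hsign, ofReal_re]
    simp only [even_two_mul, true_and, if_true, Nat.mul_div_cancel_left q two_pos, hpar]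
    rcases Nat.even_or_odd (c + q) with h | h
    · simp [h.neg_one_pow, h]; norm_num
    · simp [h.neg_one_pow, Nat.not_even_iff_odd.2 h]
  · rw [pow_succ, pow_mul, I_sq, ← mul_assoc, hsign, re_ofReal_mul, I_re, mul_zero]
    simp

theorem re_parityHalvingSum (F : (Fin n → Bool) → Fin m → Bool) :
    (parityHalvingSum F).re =
      2 * (#{x | Even (hamming x) ∧ #{j | F x j = true} % 2 = hamming x / 2 % 2} : ℝ) -
        #{x : Fin n → Bool | Even (hamming x)} := by
  simp only [parityHalvingSum, re_sum, re_neg_one_pow_mul_I_pow, sum_sub_distrib, ← mul_sum,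
    sum_boole]

theorem two_mul_card_even_hamming (n : ℕ) :
    2 * #{x : Fin n → Bool | Even (hamming x)} = 2 ^ n + 0 ^ n := by
  have hsum : ∑ x : Fin n → Bool, (-1 : ℤ) ^ hamming x = 0 ^ n := by
    simp only [hamming, pow_card_filter_eq_prod]
    rw [← Fintype.prod_sum (fun _ (b : Bool) => if b then (-1 : ℤ) else 1)]
    simp
  have hterm : ∀ x : Fin n → Bool,
      (-1 : ℤ) ^ hamming x = 2 * (if Even (hamming x) then 1 else 0) - 1 := fun x => by
    rcases Nat.even_or_odd (hamming x) with h | h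
    · simp [h.neg_one_pow, h]
    · simp [h.neg_one_pow, Nat.not_even_iff_odd.2 h]
  simp only [hterm, sum_sub_distrib, ← mul_sum, sum_boole, sum_const, card_univ,
    Fintype.card_fun, Fintype.card_bool, Fintype.card_fin, nsmul_one] at hsum
  exact_mod_cast sub_eq_iff_eq_add'.1 hsum

end ParityHalving

theorem two_pow_sub_mul_sqrt_two_pow {k n : ℕ} (hk : k ≤ n) :
    (2 : ℝ) ^ (n - k) * √2 ^ k = 2 ^ n * 2 ^ (-(k / 2 : ℝ)) := by
  rw [Real.sqrt_eq_rpow, ← Real.rpow_natCast, ← Real.rpow_natCast, ← Real.rpow_natCast,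
    ← Real.rpow_mul zero_le_two, ← Real.rpow_add two_pos, ← Real.rpow_add two_pos,
    Nat.cast_sub hk]
  ring_nf

theorem php_not_in_NC0_general (n m ℓ : ℕ)
    (F : (Fin n → Bool) → Fin m → Bool)
    (hF : ∀ j : Fin m, ∃ T : Finset (Fin n), T.card ≤ ℓ ∧
      ∀ x x' : Fin n → Bool, (∀ i ∈ T, x i = x' i) → F x j = F x' j) :
    ((Finset.univ.filter fun x : Fin n → Bool =>
        Even (hamming x) ∧
        (Finset.univ.filter fun j => F x j = true).card % 2 = (hamming x / 2) % 2).card : ℝ) /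
      ((Finset.univ.filter fun x : Fin n → Bool => Even (hamming x)).card : ℝ)
      ≤ 1 / 2 + (2 : ℝ) ^ (-((n : ℝ) ^ 2 / (2 * ((n : ℝ) + (ℓ : ℝ) ^ 2 * (m : ℝ))))) := by
  choose T hT_card hT_dep using hF
  obtain ⟨S, hS_inter, hS_card⟩ := exists_card_inter_le_one_and_sq_card_le T hT_card
  rw [Fintype.card_fin, Fintype.card_fin] at hS_card
  have hE : (2 : ℝ) ^ n ≤ 2 * (#{x : Fin n → Bool | Even (hamming x)} : ℕ) := by
    exact_mod_cast two_mul_card_even_hamming n ▸ Nat.le_add_right _ _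
  set A : ℝ := ((#{x | Even (hamming x) ∧ #{j | F x j = true} % 2 = hamming x / 2 % 2} : ℕ) : ℝ)
  set E : ℝ := ((#{x : Fin n → Bool | Even (hamming x)} : ℕ) : ℝ)
  set B : ℝ := 2 ^ (-((n : ℝ) ^ 2 / (2 * ((n : ℝ) + (ℓ : ℝ) ^ 2 * (m : ℝ)))))
  have hbias : 2 * A - E ≤ 2 ^ n * B := calc
    2 * A - E = (parityHalvingSum F).re := (re_parityHalvingSum F).symm
    _ ≤ ‖parityHalvingSum F‖ := re_le_norm _
    _ ≤ 2 ^ (n - #S) * √2 ^ #S := norm_parityHalvingSum_le hT_dep hS_inter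
    _ = 2 ^ n * 2 ^ (-(#S / 2 : ℝ)) :=
        two_pow_sub_mul_sqrt_two_pow ((card_le_univ S).trans_eq (Fintype.card_fin n))
    _ ≤ 2 ^ n * B := by
        gcongr
        exact Real.rpow_le_rpow_of_exponent_le one_le_two <| neg_le_neg <|
          div_le_of_le_mul₀ (by positivity) (by positivity) (by linarith)
  have hB : 0 ≤ B := by positivity
  have hE_pos : 0 < E := by linarith [pow_pos (two_pos : (0 : ℝ) < 2) n]
  rw [div_le_iff₀ hE_pos]
  nlinarith

/-- NC⁰ lower bound for the Parity Halving Problem: if every output bit of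
`F : {0,1}^n → {0,1}^m` depends on at most `ℓ` input bits, then `F` solves the
Parity Halving Problem on a random even-parity input with probability at most
`1/2 + 2^{−n²/(2(n + ℓ²·m))}`. -/
theorem php_not_in_NC0 (n m ℓ : ℕ) (hn : 1 ≤ n)
    (F : (Fin n → Bool) → Fin m → Bool)
    (hF : ∀ j : Fin m, ∃ T : Finset (Fin n), T.card ≤ ℓ ∧
      ∀ x x' : Fin n → Bool, (∀ i ∈ T, x i = x' i) → F x j = F x' j) :
    ((Finset.univ.filter fun x : Fin n → Bool =>
        Even (hamming x) ∧
        (Finset.univ.filter fun j => F x j = true).card % 2 = (hamming x / 2) % 2).card : ℝ) /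
      ((Finset.univ.filter fun x : Fin n → Bool => Even (hamming x)).card : ℝ)
      ≤ 1 / 2 + (2 : ℝ) ^ (-((n : ℝ) ^ 2 / (2 * ((n : ℝ) + (ℓ : ℝ) ^ 2 * (m : ℝ))))) :=
  php_not_in_NC0_general n m ℓ F hF
end

section
/- Constrained Parity Halving Game bound: let n ≥ 1, let D ⊆ Fin n with |D| = d₁ and ζ : Fin n → Bool a fixed assignment on D, and let the complement of D be partitioned into d₂ parts S_1, …, S_{d₂}, each of size ≥ 2, with target parities p_1, …, p_{d₂} ∈ ZMod 2. Assume every string in the support has even Hamming weight, i.e., the Hamming weight of ζ restricted to D plus ∑_j p_j is even. Then for every family g : Fin n → (Bool → Bool), the fraction of strings x : Fin n → Bool agreeing with ζ on D and satisfying ∑_{i ∈ S_j} x_i ≡ p_j (mod 2) for all j, for which additionally (∑_i g_i(x_i)) ≡ |x|/2 (mod 2), is at most 1/2 + 2^{−(n−d₁)/2 + d₂}. -/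
/-!
Expanding the indicator of each parity constraint as `(1 + (-1) ^ p_j (-1) ^ |x ∩ S_j|) / 2`
writes `2 ^ d₂` times a sum of a product weight `∏ i, w i (x i)` over the support as `2 ^ d₂`
unconstrained sums, each of which factors over the coordinates. For `w = 1` every nonempty set
of constraints contributes `0`, so the support has `2 ^ (n - d₁ - d₂)` elements. For
`w i b = (-1) ^ g i b * I ^ b` the weight of a string of even Hamming weight is `+1` when the
players win and `-1` when they lose, while every factor at a free coordinate is `±1 ± I`, of
modulus `√2`; hence `#win - #lose ≤ 2 ^ ((n - d₁) / 2)`.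
-/

open Finset Function

section ParityConstraints

variable {R ι κ : Type*}

lemma prod_ite_one_eq_pow_card_filter [CommMonoid R] (s : Finset ι) (q : ι → Prop)
    [DecidablePred q] (a : R) : ∏ i ∈ s, (if q i then a else 1) = a ^ (s.filter q).card := by
  rw [prod_ite, prod_const, prod_const_one, mul_one]

lemma ite_natCast_eq_mul_two [Ring R] (c : ℕ) (q : ZMod 2) :
    (if (c : ZMod 2) = q then (1 : R) else 0) * 2 = 1 + (-1) ^ q.val * (-1) ^ c := by
  obtain rfl | rfl : q = 0 ∨ q = 1 := by decide +revert
  all_goals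
    rcases Nat.even_or_odd c with hc | hc
    · rw [ZMod.natCast_eq_zero_iff_even.2 hc, hc.neg_one_pow]
      norm_num [ZMod.val_one]
    · rw [ZMod.natCast_eq_one_iff_odd.2 hc, hc.neg_one_pow]
      norm_num [ZMod.val_one]

variable [DecidableEq ι] [Fintype κ]

def fixOn [Zero R] (D : Finset ι) (ζ : ι → Bool) (w : ι → Bool → R) (i : ι) (b : Bool) : R :=
  if i ∈ D ∧ b ≠ ζ i then 0 else w i b

lemma ite_forall_parity_mul_two_pow [CommRing R] {S : κ → Finset ι}
    (hS : Pairwise (Disjoint on S)) (p : κ → ZMod 2) (x : ι → Bool) :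
    (if ∀ j, (((S j).filter fun i => x i = true).card : ZMod 2) = p j then (1 : R) else 0) *
        2 ^ Fintype.card κ =
      ∑ E : Finset κ, (∏ j ∈ E, (-1) ^ (p j).val) *
        ∏ i ∈ E.biUnion S, if x i = true then -1 else 1 := by
  rw [← Fintype.prod_boole, ← card_univ, ← prod_const, ← prod_mul_distrib]
  simp_rw [ite_natCast_eq_mul_two]
  rw [prod_one_add, powerset_univ]
  refine sum_congr rfl fun E _ => ?_
  rw [prod_mul_distrib, prod_biUnion (hS.set_pairwise _)]
  simp_rw [prod_ite_one_eq_pow_card_filter]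

variable [Fintype ι]

def constrainedSupport (D : Finset ι) (ζ : ι → Bool) (S : κ → Finset ι) (p : κ → ZMod 2) :
    Finset (ι → Bool) :=
  univ.filter fun x => (∀ i ∈ D, x i = ζ i) ∧
    ∀ j, (((S j).filter fun i => x i = true).card : ZMod 2) = p j

lemma mem_constrainedSupport {D : Finset ι} {ζ : ι → Bool} {S : κ → Finset ι} {p : κ → ZMod 2}
    {x : ι → Bool} : x ∈ constrainedSupport D ζ S p ↔
      (∀ i ∈ D, x i = ζ i) ∧ ∀ j, (((S j).filter fun i => x i = true).card : ZMod 2) = p j := by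
  simp [constrainedSupport]

omit [Fintype κ] in
lemma prod_fixOn [CommMonoidWithZero R] (D : Finset ι) (ζ : ι → Bool) (w : ι → Bool → R)
    (x : ι → Bool) :
    ∏ i, fixOn D ζ w i (x i) = if ∀ i ∈ D, x i = ζ i then ∏ i, w i (x i) else 0 := by
  split_ifs with hx
  · exact prod_congr rfl fun i _ => if_neg fun h => h.2 (hx i h.1)
  · push Not at hx
    obtain ⟨i, hiD, hi⟩ := hx
    exact prod_eq_zero (mem_univ i) (if_pos (⟨hiD, hi⟩ : i ∈ D ∧ x i ≠ ζ i))

lemma sum_constrainedSupport_mul_two_pow [CommRing R] (D : Finset ι) (ζ : ι → Bool)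
    {S : κ → Finset ι} (hS : Pairwise (Disjoint on S)) (p : κ → ZMod 2) (w : ι → Bool → R) :
    (∑ x ∈ constrainedSupport D ζ S p, ∏ i, w i (x i)) * 2 ^ Fintype.card κ =
      ∑ E : Finset κ, (∏ j ∈ E, (-1) ^ (p j).val) *
        ∏ i, (fixOn D ζ w i false + (if i ∈ E.biUnion S then -1 else 1) * fixOn D ζ w i true) := by
  calc (∑ x ∈ constrainedSupport D ζ S p, ∏ i, w i (x i)) * 2 ^ Fintype.card κ
      = ∑ x : ι → Bool, (if ∀ j, (((S j).filter fun i => x i = true).card : ZMod 2) = p j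
          then (1 : R) else 0) * 2 ^ Fintype.card κ * ∏ i, fixOn D ζ w i (x i) := by
        rw [constrainedSupport, sum_filter, sum_mul]
        refine sum_congr rfl fun x _ => ?_
        rw [prod_fixOn]
        split_ifs <;> simp_all [mul_comm]
    _ = ∑ x : ι → Bool, ∑ E : Finset κ, (∏ j ∈ E, (-1) ^ (p j).val) *
          ∏ i, (if i ∈ E.biUnion S ∧ x i = true then -1 else 1) * fixOn D ζ w i (x i) := by
        refine sum_congr rfl fun x _ => ?_
        rw [ite_forall_parity_mul_two_pow hS, sum_mul]
        refine sum_congr rfl fun E _ => ?_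
        simp_rw [mul_assoc, prod_mul_distrib, ite_and, Fintype.prod_ite_mem]
    _ = _ := by
        rw [sum_comm]
        refine sum_congr rfl fun E _ => ?_
        have hcol : ∀ i, fixOn D ζ w i false +
            (if i ∈ E.biUnion S then -1 else 1) * fixOn D ζ w i true =
              ∑ b, (if i ∈ E.biUnion S ∧ b = true then -1 else 1) * fixOn D ζ w i b := by
          simp [add_comm]
        simp_rw [← mul_sum, hcol, Fintype.prod_sum]

lemma card_constrainedSupport_mul_two_pow (D : Finset ι) (ζ : ι → Bool) {S : κ → Finset ι}
    (hS : Pairwise (Disjoint on S)) (hne : ∀ j, (S j).Nonempty) (hSD : ∀ j, S j ⊆ Dᶜ)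
    (p : κ → ZMod 2) :
    (constrainedSupport D ζ S p).card * 2 ^ Fintype.card κ = 2 ^ Dᶜ.card := by
  have h := sum_constrainedSupport_mul_two_pow (R := ℤ) D ζ hS p fun _ _ => 1
  rw [sum_eq_single_of_mem ∅ (mem_univ _)] at h
  · have hcol : ∀ i, fixOn D ζ (fun _ _ => (1 : ℤ)) i false + fixOn D ζ (fun _ _ => 1) i true
        = if i ∈ Dᶜ then 2 else 1 := by
      intro i
      by_cases hi : i ∈ D
      · cases h : ζ i <;> simp [fixOn, hi, h]
      · simp [fixOn, hi]
    simp_rw [biUnion_empty, notMem_empty, if_false, one_mul, hcol, Fintype.prod_ite_mem] at h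
    simp only [prod_const_one, sum_const, nsmul_eq_mul, mul_one, prod_empty, prod_const,
      one_mul] at h
    exact_mod_cast h
  · intro E _ hE
    obtain ⟨j, hj⟩ := nonempty_iff_ne_empty.2 hE
    obtain ⟨i, hi⟩ := hne j
    have hiD : i ∉ D := mem_compl.1 (hSD j hi)
    refine mul_eq_zero_of_right _ (prod_eq_zero (mem_univ i) ?_)
    simp [fixOn, hiD, mem_biUnion.2 ⟨j, hj, hi⟩]

lemma norm_sum_constrainedSupport_le {𝕜 : Type*} [RCLike 𝕜] (D : Finset ι) (ζ : ι → Bool)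
    {S : κ → Finset ι} (hS : Pairwise (Disjoint on S)) (p : κ → ZMod 2) (w : ι → Bool → 𝕜)
    (c : ι → ℝ) (hD : ∀ i ∈ D, ‖w i (ζ i)‖ ≤ c i)
    (hDc : ∀ i ∉ D, ∀ s : 𝕜, s = 1 ∨ s = -1 → ‖w i false + s * w i true‖ ≤ c i) :
    ‖∑ x ∈ constrainedSupport D ζ S p, ∏ i, w i (x i)‖ ≤ ∏ i, c i := by
  have hcol : ∀ (B : Finset ι) i,
      ‖fixOn D ζ w i false + (if i ∈ B then -1 else 1) * fixOn D ζ w i true‖ ≤ c i := by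
    intro B i
    by_cases hi : i ∈ D
    · have hwi := hD i hi
      cases h : ζ i <;> rw [h] at hwi <;> by_cases hB : i ∈ B <;> simp [fixOn, hi, hB, h, hwi]
    · simpa [fixOn, hi] using hDc i hi (if i ∈ B then -1 else 1) (by split_ifs <;> simp)
  have hterm : ∀ E : Finset κ, ‖(∏ j ∈ E, (-1 : 𝕜) ^ (p j).val) *
      ∏ i, (fixOn D ζ w i false + (if i ∈ E.biUnion S then -1 else 1) * fixOn D ζ w i true)‖
        ≤ ∏ i, c i := by
    intro E
    rw [norm_mul, norm_prod, norm_prod]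
    simp only [norm_pow, norm_neg, norm_one, one_pow, prod_const_one, one_mul]
    exact prod_le_prod (fun i _ => norm_nonneg _) fun i _ => hcol _ i
  refine le_of_mul_le_mul_right ?_ (by positivity : (0 : ℝ) < 2 ^ Fintype.card κ)
  calc ‖∑ x ∈ constrainedSupport D ζ S p, ∏ i, w i (x i)‖ * 2 ^ Fintype.card κ
      = ‖(∑ x ∈ constrainedSupport D ζ S p, ∏ i, w i (x i)) * 2 ^ Fintype.card κ‖ := by
        simp [norm_mul, norm_pow]
    _ ≤ ∑ E : Finset κ, ‖(∏ j ∈ E, (-1 : 𝕜) ^ (p j).val) *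
          ∏ i, (fixOn D ζ w i false +
            (if i ∈ E.biUnion S then -1 else 1) * fixOn D ζ w i true)‖ := by
        rw [sum_constrainedSupport_mul_two_pow D ζ hS p w]
        exact norm_sum_le _ _
    _ ≤ (∏ i, c i) * 2 ^ Fintype.card κ := by
        refine (sum_le_sum fun E _ => hterm E).trans_eq ?_
        rw [sum_const, card_univ, Fintype.card_finset, nsmul_eq_mul, mul_comm]
        push_cast
        rfl

end ParityConstraints

section ParityHalvingGame

open Complex

def gameWeight {ι : Type*} (g : ι → Bool → Bool) (i : ι) (b : Bool) : ℂ :=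
  (if g i b = true then -1 else 1) * (if b = true then I else 1)

lemma norm_gameWeight {ι : Type*} (g : ι → Bool → Bool) (i : ι) (b : Bool) :
    ‖gameWeight g i b‖ = 1 := by
  by_cases h : g i b = true <;> cases b <;> simp [gameWeight, h]

lemma norm_gameWeight_false_add {ι : Type*} (g : ι → Bool → Bool) (i : ι) {s : ℂ}
    (hs : s = 1 ∨ s = -1) : ‖gameWeight g i false + s * gameWeight g i true‖ = √2 := by
  rcases hs with rfl | rfl <;> by_cases h₀ : g i false = true <;> by_cases h₁ : g i true = true <;>
    norm_num [gameWeight, h₀, h₁, norm_def, normSq_apply]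

lemma neg_one_pow_mul_I_pow_of_even (a : ℕ) {h : ℕ} (hh : Even h) :
    (-1 : ℂ) ^ a * I ^ h = if a % 2 = h / 2 % 2 then 1 else -1 := by
  obtain ⟨m, rfl⟩ := hh
  rw [← two_mul, pow_mul, I_sq, ← pow_add, Nat.mul_div_cancel_left m two_pos]
  rcases Nat.even_or_odd (a + m) with h | h
  · rw [h.neg_one_pow, if_pos (by rcases h with ⟨k, hk⟩; omega)]
  · rw [h.neg_one_pow, if_neg (by rcases h with ⟨k, hk⟩; omega)]

variable {κ : Type*} [Fintype κ] {n : ℕ}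

def wins (g : Fin n → Bool → Bool) (x : Fin n → Bool) : Prop :=
  (univ.filter fun i => g i (x i) = true).card % 2 = hamming x / 2 % 2

instance (g : Fin n → Bool → Bool) : DecidablePred (wins g) :=
  fun _ => inferInstanceAs (Decidable (_ = _))

omit [Fintype κ] in
lemma prod_gameWeight (g : Fin n → Bool → Bool) (x : Fin n → Bool) :
    ∏ i, gameWeight g i (x i) =
      (-1) ^ (univ.filter fun i => g i (x i) = true).card * I ^ hamming x := by
  simp only [gameWeight, prod_mul_distrib, prod_ite_one_eq_pow_card_filter, hamming]

lemma even_hamming_of_mem_constrainedSupport {D : Finset (Fin n)} {ζ : Fin n → Bool}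
    {S : κ → Finset (Fin n)} {p : κ → ZMod 2} (hS : Pairwise (Disjoint on S))
    (hunion : univ.biUnion S = Dᶜ)
    (heven : (((D.filter fun i => ζ i = true).card : ZMod 2) + ∑ j, p j) = 0)
    {x : Fin n → Bool} (hx : x ∈ constrainedSupport D ζ S p) : Even (hamming x) := by
  obtain ⟨hxD, hxS⟩ := mem_constrainedSupport.1 hx
  have hsplit : hamming x = (D.filter fun i => x i = true).card +
      ∑ j, ((S j).filter fun i => x i = true).card := by
    rw [hamming, ← union_compl D, filter_union, card_union_of_disjoint
      (disjoint_compl_right.mono (filter_subset _ _) (filter_subset _ _)), ← hunion,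
      filter_biUnion, card_biUnion fun j _ k _ hjk =>
        (hS hjk).mono (filter_subset _ _) (filter_subset _ _)]
  have hD : D.filter (fun i => x i = true) = D.filter fun i => ζ i = true :=
    filter_congr fun i hi => by rw [hxD i hi]
  rw [← ZMod.natCast_eq_zero_iff_even, hsplit]
  push_cast
  rw [hD, sum_congr rfl fun j _ => hxS j, heven]

lemma two_mul_card_filter_wins_sub_card_le {D : Finset (Fin n)} (ζ : Fin n → Bool)
    {S : κ → Finset (Fin n)} {p : κ → ZMod 2} (hS : Pairwise (Disjoint on S))
    (hunion : univ.biUnion S = Dᶜ)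
    (heven : (((D.filter fun i => ζ i = true).card : ZMod 2) + ∑ j, p j) = 0)
    (g : Fin n → Bool → Bool) :
    2 * ((constrainedSupport D ζ S p).filter (wins g)).card -
        ((constrainedSupport D ζ S p).card : ℝ) ≤ √2 ^ Dᶜ.card := by
  set T := constrainedSupport D ζ S p
  have hsign : ∀ x ∈ T, ∏ i, gameWeight g i (x i) = 2 * (if wins g x then 1 else 0) - 1 := by
    intro x hx
    rw [prod_gameWeight, neg_one_pow_mul_I_pow_of_even _
      (even_hamming_of_mem_constrainedSupport hS hunion heven hx)]
    by_cases hw : wins g x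
    · rw [if_pos hw, if_pos (show _ = _ from hw)]
      norm_num
    · rw [if_neg hw, if_neg (show ¬ _ = _ from hw)]
      norm_num
  have hsum : ∑ x ∈ T, ∏ i, gameWeight g i (x i)
      = ((2 * (T.filter (wins g)).card - T.card : ℝ) : ℂ) := by
    rw [sum_congr rfl hsign, sum_sub_distrib, ← mul_sum, sum_boole]
    push_cast
    simp
  have hbound := norm_sum_constrainedSupport_le D ζ hS p (gameWeight g)
    (fun i => if i ∈ Dᶜ then √2 else 1) (fun i hi => by simp [hi, norm_gameWeight])
    (fun i hi s hs => by simp [hi, norm_gameWeight_false_add g i hs])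
  rw [hsum, norm_real, Real.norm_eq_abs, Fintype.prod_ite_mem, prod_const] at hbound
  exact (le_abs_self _).trans hbound

end ParityHalvingGame

lemma div_le_one_half_add_rpow {W T : ℝ} {K d : ℕ} (hT : T * 2 ^ d = 2 ^ K)
    (hW : 2 * W - T ≤ √2 ^ K) : W / T ≤ 1 / 2 + (2 : ℝ) ^ (-((K : ℝ) / 2) + d) := by
  have hTpos : 0 < T :=
    pos_of_mul_pos_left (hT ▸ by positivity) (by positivity : (0 : ℝ) ≤ 2 ^ d)
  have hsqrt : √2 ^ K = (2 : ℝ) ^ (-((K : ℝ) / 2) + d) * T := by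
    rw [Real.rpow_add two_pos, Real.rpow_natCast, mul_assoc, mul_comm _ T, hT,
      Real.rpow_neg two_pos.le, Real.sqrt_eq_rpow, ← Real.rpow_natCast,
      ← Real.rpow_natCast 2 K, ← Real.rpow_mul two_pos.le]
    field_simp
    rw [← Real.rpow_mul_natCast two_pos.le]
    ring_nf
  have hR : 0 < (2 : ℝ) ^ (-((K : ℝ) / 2) + d) * T := by positivity
  rw [div_le_iff₀ hTpos]
  linarith

theorem constrained_parity_halving_game_bound_general (n d₂ : ℕ)
    (D : Finset (Fin n)) (ζ : Fin n → Bool)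
    (S : Fin d₂ → Finset (Fin n)) (p : Fin d₂ → ZMod 2)
    (hdisj : ∀ j k, j ≠ k → Disjoint (S j) (S k))
    (hunion : Finset.univ.biUnion S = Dᶜ)
    (hsize : ∀ j, 2 ≤ (S j).card)
    (heven : (((D.filter fun i => ζ i = true).card : ZMod 2) + ∑ j, p j) = 0)
    (g : Fin n → Bool → Bool) :
    ((Finset.univ.filter fun x : Fin n → Bool =>
        ((∀ i ∈ D, x i = ζ i) ∧
          ∀ j, (((S j).filter fun i => x i = true).card : ZMod 2) = p j) ∧
        (Finset.univ.filter fun i => g i (x i) = true).card % 2 = (hamming x / 2) % 2).card : ℝ) /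
      ((Finset.univ.filter fun x : Fin n → Bool =>
        (∀ i ∈ D, x i = ζ i) ∧
          ∀ j, (((S j).filter fun i => x i = true).card : ZMod 2) = p j).card : ℝ)
      ≤ 1 / 2 + (2 : ℝ) ^ (-(((n : ℝ) - (D.card : ℝ)) / 2) + (d₂ : ℝ)) := by
  have hS : Pairwise (Disjoint on S) := fun j k => hdisj j k
  have hSD : ∀ j, S j ⊆ Dᶜ := fun j => hunion ▸ subset_biUnion_of_mem S (mem_univ j)
  have hne : ∀ j, (S j).Nonempty := fun j => card_pos.1 (zero_lt_two.trans_le (hsize j))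
  have hcard := card_constrainedSupport_mul_two_pow D ζ hS hne hSD p
  rw [Fintype.card_fin] at hcard
  have hK : (Dᶜ.card : ℝ) = n - D.card := by
    rw [card_compl, Fintype.card_fin, Nat.cast_sub (card_finset_fin_le D)]
  have hT : (univ.filter fun x : Fin n → Bool => (∀ i ∈ D, x i = ζ i) ∧
      ∀ j, (((S j).filter fun i => x i = true).card : ZMod 2) = p j) =
        constrainedSupport D ζ S p :=
    (filter_congr_decidable _ _ _).symm
  rw [← hK, ← filter_filter, hT]
  exact div_le_one_half_add_rpow (by exact_mod_cast hcard)
    (two_mul_card_filter_wins_sub_card_le ζ hS hunion heven g)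

/-- Constrained Parity Halving Game bound: `d₁ = D.card` players' inputs are fixed to `ζ`,
the remaining players are partitioned into `d₂` groups `S j` (each of size ≥ 2) with
prescribed input parities `p j`, and the total parity of the support is even.  Then any
family of one-bit strategies wins on the uniform distribution over the constrained inputs
with probability at most `1/2 + 2^{−(n−d₁)/2 + d₂}`. -/
theorem constrained_parity_halving_game_bound (n d₂ : ℕ) (hn : 1 ≤ n)
    (D : Finset (Fin n)) (ζ : Fin n → Bool)
    (S : Fin d₂ → Finset (Fin n)) (p : Fin d₂ → ZMod 2)
    (hdisj : ∀ j k, j ≠ k → Disjoint (S j) (S k))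
    (hunion : Finset.univ.biUnion S = Dᶜ)
    (hsize : ∀ j, 2 ≤ (S j).card)
    (heven : (((D.filter fun i => ζ i = true).card : ZMod 2) + ∑ j, p j) = 0)
    (g : Fin n → Bool → Bool) :
    ((Finset.univ.filter fun x : Fin n → Bool =>
        ((∀ i ∈ D, x i = ζ i) ∧
          ∀ j, (((S j).filter fun i => x i = true).card : ZMod 2) = p j) ∧
        (Finset.univ.filter fun i => g i (x i) = true).card % 2 = (hamming x / 2) % 2).card : ℝ) /
      ((Finset.univ.filter fun x : Fin n → Bool =>
        (∀ i ∈ D, x i = ζ i) ∧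
          ∀ j, (((S j).filter fun i => x i = true).card : ZMod 2) = p j).card : ℝ)
      ≤ 1 / 2 + (2 : ℝ) ^ (-(((n : ℝ) - (D.card : ℝ)) / 2) + (d₂ : ℝ)) :=
  constrained_parity_halving_game_bound_general n d₂ D ζ S p hdisj hunion hsize heven g
end

section
/- Block decomposition of Hidden Linear Function solutions: let α, β be finite types, let A be a symmetric matrix over ZMod 4 indexed by α ⊕ β with all entries 0 or 1 and with A(inl i, inr j) = 0 and A(inr j, inl i) = 0 for all i : α, j : β, and let b : α ⊕ β → ZMod 4. Let A₁, b₁ (resp. A₂, b₂) be the restrictions to α (resp. β), with quadratic forms q, q₁, q₂. Then p : α ⊕ β → Bool is an HLF solution for (A, b) if and only if p∘inl is an HLF solution for (A₁, b₁) and p∘inr is an HLF solution for (A₂, b₂). -/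
/-- Lift of a Boolean to `{0,1} ⊆ ZMod 4`. -/
def b4 (u : Bool) : ZMod 4 := if u then 1 else 0

/-- Lift of a Boolean to `{0,1} ⊆ ZMod 2`. -/
def b2 (u : Bool) : ZMod 2 := if u then 1 else 0

/-- Lift of `ZMod 2` to `{0,1} ⊆ ZMod 4`. -/
def lift24 (t : ZMod 2) : ZMod 4 := (t.val : ZMod 4)

/-- The quadratic form `q(u) = uᵀ A u + bᵀ u` over `ZMod 4`, on Boolean vectors. -/
def qform {ι : Type} [Fintype ι] (A : Matrix ι ι (ZMod 4)) (b : ι → ZMod 4)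
    (u : ι → Bool) : ZMod 4 :=
  (∑ i, ∑ j, A i j * b4 (u i) * b4 (u j)) + ∑ i, b i * b4 (u i)

/-- The hidden linear subspace `L_q = {u | ∀ v, q(u ⊕ v) = q(u) + q(v)}`. -/
def Lq {ι : Type} [Fintype ι] (A : Matrix ι ι (ZMod 4)) (b : ι → ZMod 4) :
    Set (ι → Bool) :=
  {u | ∀ v, qform A b (fun i => xor (u i) (v i)) = qform A b u + qform A b v}

/-- `p` is a solution of the Hidden Linear Function problem for `(A, b)` if
`q(u) = 2⟨p,u⟩` for every `u ∈ L_q`, where `⟨p,u⟩` is the mod-2 inner product. -/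
def IsHLFSolution {ι : Type} [Fintype ι] (A : Matrix ι ι (ZMod 4)) (b : ι → ZMod 4)
    (p : ι → Bool) : Prop :=
  ∀ u ∈ Lq A b, qform A b u = 2 * lift24 (∑ i, b2 (p i) * b2 (u i))

/-!
Because `A` has no entries between the two blocks, `q (Sum.elim u₁ u₂) = q₁ u₁ + q₂ u₂`, and the
inner product `⟨p, u⟩` splits in the same way; hence `L_q = L_{q₁} × L_{q₂}`. The HLF condition on
this product decouples into the two block conditions by testing it against `(u₁, 0)` and `(0, u₂)`,
since `q` and `⟨p, ·⟩` vanish at `0` and `0 ∈ L_q`.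
-/

@[simp]
lemma b2_false : b2 false = 0 := rfl

@[simp]
lemma lift24_zero : lift24 0 = 0 := rfl

lemma two_mul_lift24_add (s t : ZMod 2) :
    2 * lift24 (s + t) = 2 * lift24 s + 2 * lift24 t := by
  revert s t
  decide

section

-- `A` is a plain function rather than a `Matrix` so that these lemmas rewrite the blocks
-- `fun i j => A _ _` of the theorem: `rw`/`simp` cannot unify their type with `Matrix ι ι (ZMod 4)`.
variable {ι : Type} [Fintype ι] (A : ι → ι → ZMod 4) (b : ι → ZMod 4)

@[simp]
lemma qform_false : qform A b (fun _ => false) = 0 := by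
  simp [qform, b4]

lemma false_mem_Lq : (fun _ => false) ∈ Lq A b := fun v => by
  simp

end

section BlockDiagonal

variable {α β : Type} [Fintype α] [Fintype β] {A : Matrix (α ⊕ β) (α ⊕ β) (ZMod 4)}
  {b : α ⊕ β → ZMod 4}

lemma qform_sumElim (hblock₁ : ∀ (i : α) (j : β), A (Sum.inl i) (Sum.inr j) = 0)
    (hblock₂ : ∀ (i : α) (j : β), A (Sum.inr j) (Sum.inl i) = 0) (u : α → Bool) (v : β → Bool) :
    qform A b (Sum.elim u v) =
      qform (fun i j => A (Sum.inl i) (Sum.inl j)) (fun i => b (Sum.inl i)) u +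
        qform (fun i j => A (Sum.inr i) (Sum.inr j)) (fun i => b (Sum.inr i)) v := by
  simp only [qform, Fintype.sum_sum_type, Sum.elim_inl, Sum.elim_inr, hblock₁, hblock₂,
    zero_mul, Finset.sum_const_zero, add_zero, zero_add]
  ring

lemma sumElim_mem_Lq_iff (hblock₁ : ∀ (i : α) (j : β), A (Sum.inl i) (Sum.inr j) = 0)
    (hblock₂ : ∀ (i : α) (j : β), A (Sum.inr j) (Sum.inl i) = 0) (u : α → Bool) (v : β → Bool) :
    Sum.elim u v ∈ Lq A b ↔
      u ∈ Lq (fun i j => A (Sum.inl i) (Sum.inl j)) (fun i => b (Sum.inl i)) ∧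
        v ∈ Lq (fun i j => A (Sum.inr i) (Sum.inr j)) (fun i => b (Sum.inr i)) := by
  have hxor (u' : α → Bool) (v' : β → Bool) :
      (fun i => xor (Sum.elim u v i) (Sum.elim u' v' i)) =
        Sum.elim (fun i => xor (u i) (u' i)) (fun j => xor (v j) (v' j)) := by
    funext i
    cases i <;> rfl
  constructor
  · intro h
    refine ⟨fun u' => ?_, fun v' => ?_⟩
    · have h' := h (Sum.elim u' fun _ => false)
      simp only [hxor, qform_sumElim hblock₁ hblock₂, Bool.xor_false, qform_false] at h'
      linear_combination h'
    · have h' := h (Sum.elim (fun _ => false) v')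
      simp only [hxor, qform_sumElim hblock₁ hblock₂, Bool.xor_false, qform_false] at h'
      linear_combination h'
  · rintro ⟨hu, hv⟩ w
    obtain ⟨u', v', rfl⟩ : ∃ u' v', w = Sum.elim u' v' := ⟨_, _, (Sum.elim_comp_inl_inr w).symm⟩
    simp only [hxor, qform_sumElim hblock₁ hblock₂, hu u', hv v']
    ring

lemma isHLFSolution_iff_forall_blocks
    (hblock₁ : ∀ (i : α) (j : β), A (Sum.inl i) (Sum.inr j) = 0)
    (hblock₂ : ∀ (i : α) (j : β), A (Sum.inr j) (Sum.inl i) = 0) (p : α ⊕ β → Bool) :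
    IsHLFSolution A b p ↔
      ∀ u v, u ∈ Lq (fun i j => A (Sum.inl i) (Sum.inl j)) (fun i => b (Sum.inl i)) →
        v ∈ Lq (fun i j => A (Sum.inr i) (Sum.inr j)) (fun i => b (Sum.inr i)) →
        qform (fun i j => A (Sum.inl i) (Sum.inl j)) (fun i => b (Sum.inl i)) u +
            qform (fun i j => A (Sum.inr i) (Sum.inr j)) (fun i => b (Sum.inr i)) v =
          2 * lift24 (∑ i, b2 ((p ∘ Sum.inl) i) * b2 (u i)) +
            2 * lift24 (∑ j, b2 ((p ∘ Sum.inr) j) * b2 (v j)) := by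
  refine ⟨fun h u v hu hv => ?_, fun h w hw => ?_⟩
  · have := h _ ((sumElim_mem_Lq_iff hblock₁ hblock₂ u v).2 ⟨hu, hv⟩)
    rwa [qform_sumElim hblock₁ hblock₂, Fintype.sum_sum_type, two_mul_lift24_add] at this
  · obtain ⟨u, v, rfl⟩ : ∃ u v, w = Sum.elim u v := ⟨_, _, (Sum.elim_comp_inl_inr w).symm⟩
    obtain ⟨hu, hv⟩ := (sumElim_mem_Lq_iff hblock₁ hblock₂ u v).1 hw
    rw [qform_sumElim hblock₁ hblock₂, h u v hu hv, Fintype.sum_sum_type, two_mul_lift24_add]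
    rfl

end BlockDiagonal

theorem hlf_solution_block_decomposition_general {α β : Type} [Fintype α] [Fintype β]
    (A : Matrix (α ⊕ β) (α ⊕ β) (ZMod 4)) (b : α ⊕ β → ZMod 4)
    (hblock₁ : ∀ (i : α) (j : β), A (Sum.inl i) (Sum.inr j) = 0)
    (hblock₂ : ∀ (i : α) (j : β), A (Sum.inr j) (Sum.inl i) = 0)
    (p : α ⊕ β → Bool) :
    IsHLFSolution A b p ↔
      (IsHLFSolution (fun i j => A (Sum.inl i) (Sum.inl j)) (fun i => b (Sum.inl i))
          (p ∘ Sum.inl) ∧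
       IsHLFSolution (fun i j => A (Sum.inr i) (Sum.inr j)) (fun i => b (Sum.inr i))
          (p ∘ Sum.inr)) := by
  rw [isHLFSolution_iff_forall_blocks hblock₁ hblock₂]
  constructor
  · intro h
    refine ⟨fun u hu => ?_, fun v hv => ?_⟩
    · simpa using h u _ hu (false_mem_Lq _ _)
    · simpa using h _ v (false_mem_Lq _ _) hv
  · rintro ⟨h₁, h₂⟩ u v hu hv
    rw [h₁ u hu, h₂ v hv]

/-- Block decomposition of Hidden Linear Function solutions: for a block-diagonal symmetric
`{0,1}`-matrix `A` over `ZMod 4` indexed by `α ⊕ β`, a vector `p` is an HLF solution for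
`(A, b)` iff its restrictions are HLF solutions for the two blocks. -/
theorem hlf_solution_block_decomposition {α β : Type} [Fintype α] [Fintype β]
    (A : Matrix (α ⊕ β) (α ⊕ β) (ZMod 4)) (b : α ⊕ β → ZMod 4)
    (hA01 : ∀ i j, A i j = 0 ∨ A i j = 1)
    (hAsymm : ∀ i j, A i j = A j i)
    (hblock₁ : ∀ (i : α) (j : β), A (Sum.inl i) (Sum.inr j) = 0)
    (hblock₂ : ∀ (i : α) (j : β), A (Sum.inr j) (Sum.inl i) = 0)
    (p : α ⊕ β → Bool) :
    IsHLFSolution A b p ↔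
      (IsHLFSolution (fun i j => A (Sum.inl i) (Sum.inl j)) (fun i => b (Sum.inl i))
          (p ∘ Sum.inl) ∧
       IsHLFSolution (fun i j => A (Sum.inr i) (Sum.inr j)) (fun i => b (Sum.inr i))
          (p ∘ Sum.inr)) :=
  hlf_solution_block_decomposition_general A b hblock₁ hblock₂ p
end

section
/- Membership of the lifted all-ones vector in L_q for the RPHP-to-HLF reduction: let V, E be finite types and M : Matrix V E (ZMod 2) with every column summing to zero (∑_v M(v,e) = 0 for each e). Let x : V → Bool have even Hamming weight, and let w : E → Bool satisfy M·ŵ = x̂ over ZMod 2 (i.e., for every v, ∑_e M(v,e)·ŵ_e equals the mod-2 lift of x_v, where ŵ_e ∈ ZMod 2 lifts the Boolean w_e). Form the HLF instance on index type V ⊕ E with A(inl v, inr e) = A(inr e, inl v) = the {0,1}-lift of M(v,e) in ZMod 4, all other entries of A zero, b(inl v) = the lift of x_v, and b(inr e) = 0. Then the vector u : V ⊕ E → Bool defined by u(inl v) = true for all v and u(inr e) = w_e lies in L_q. -/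
/-- The HLF matrix of the RPHP-to-HLF reduction: the `{0,1}`-lift of the incidence
matrix `M`, placed in the two off-diagonal blocks of a `(V ⊕ E) × (V ⊕ E)` matrix. -/
def hlfA {V E : Type} (M : Matrix V E (ZMod 2)) : Matrix (V ⊕ E) (V ⊕ E) (ZMod 4) :=
  fun i j => match i, j with
    | Sum.inl v, Sum.inr e => ((M v e).val : ZMod 4)
    | Sum.inr e, Sum.inl v => ((M v e).val : ZMod 4)
    | _, _ => 0

/-- The HLF vector of the RPHP-to-HLF reduction: the lift of `x` on `V`, zero on `E`. -/
def hlfb {V E : Type} (x : V → Bool) : V ⊕ E → ZMod 4 :=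
  Sum.elim (fun v => b4 (x v)) (fun _ => 0)

lemma b4_xor (a b : Bool) : b4 (xor a b) = b4 a + b4 b + 2 * b4 a * b4 b := by
  cases a <;> cases b <;> decide

lemma two_mul_eq_zero (z : ZMod 4)
    (h : ZMod.castHom (by norm_num : (2:ℕ) ∣ 4) (ZMod 2) z = 0) : 2 * z = 0 := by
  revert h; revert z; decide

lemma mem_Lq_of {ι : Type} [Fintype ι] (A : Matrix ι ι (ZMod 4)) (b : ι → ZMod 4)
    (hA : ∀ i j, A i j = A j i) (u : ι → Bool)
    (h : ∀ i, 2 * ((∑ j, A j i * b4 (u j)) + b i * b4 (u i)) = 0) :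
    u ∈ Lq A b := by
  simp only [Lq, Set.mem_setOf_eq]
  intro v
  simp only [qform]
  have h4 : (4 : ZMod 4) = 0 := by decide
  have hquad : (∑ i, ∑ j, A i j * b4 (xor (u i) (v i)) * b4 (xor (u j) (v j)))
      = ∑ i, ∑ j, (A i j * b4 (u i) * b4 (u j) + A i j * b4 (v i) * b4 (v j)
          + A i j * b4 (u i) * b4 (v j) + A i j * b4 (u j) * b4 (v i)
          + 2 * (A i j * (b4 (u i) * b4 (v i)) * (b4 (u j) + b4 (v j)))
          + 2 * (A i j * (b4 (u j) * b4 (v j)) * (b4 (u i) + b4 (v i)))) := by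
    refine Finset.sum_congr rfl fun i _ => Finset.sum_congr rfl fun j _ => ?_
    rw [b4_xor, b4_xor]
    linear_combination (A i j * b4 (u i) * b4 (v i) * b4 (u j) * b4 (v j)) * h4
  rw [hquad]
  have hb : (∑ i, b i * b4 (xor (u i) (v i)))
      = ∑ i, (b i * b4 (u i) + b i * b4 (v i) + 2 * (b i * (b4 (u i) * b4 (v i)))) := by
    refine Finset.sum_congr rfl fun i _ => ?_
    rw [b4_xor]; ring
  rw [hb]
  simp only [Finset.sum_add_distrib]
  have hT4 : (∑ i, ∑ j, A i j * b4 (u j) * b4 (v i))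
      = ∑ i, ∑ j, A i j * b4 (u i) * b4 (v j) := by
    rw [Finset.sum_comm]
    exact Finset.sum_congr rfl fun i _ => Finset.sum_congr rfl fun j _ => by rw [hA i j]
  have hT6 : (∑ i, ∑ j, 2 * (A i j * (b4 (u j) * b4 (v j)) * (b4 (u i) + b4 (v i))))
      = ∑ i, ∑ j, 2 * (A i j * (b4 (u i) * b4 (v i)) * (b4 (u j) + b4 (v j))) := by
    rw [Finset.sum_comm]
    exact Finset.sum_congr rfl fun i _ => Finset.sum_congr rfl fun j _ => by rw [hA i j]
  rw [hT4, hT6]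
  have h55 : (∑ i, ∑ j, 2 * (A i j * (b4 (u i) * b4 (v i)) * (b4 (u j) + b4 (v j))))
      + (∑ i, ∑ j, 2 * (A i j * (b4 (u i) * b4 (v i)) * (b4 (u j) + b4 (v j)))) = 0 := by
    rw [← Finset.sum_add_distrib]
    refine Finset.sum_eq_zero fun i _ => ?_
    rw [← Finset.sum_add_distrib]
    refine Finset.sum_eq_zero fun j _ => ?_
    linear_combination (A i j * (b4 (u i) * b4 (v i)) * (b4 (u j) + b4 (v j))) * h4
  have h33 : (∑ i, ∑ j, A i j * b4 (u i) * b4 (v j))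
      + (∑ i, ∑ j, A i j * b4 (u i) * b4 (v j))
      + (∑ i, 2 * (b i * (b4 (u i) * b4 (v i)))) = 0 := by
    have e3 : (∑ i, ∑ j, A i j * b4 (u i) * b4 (v j))
        = ∑ i, (∑ j, A j i * b4 (u j)) * b4 (v i) := by
      rw [Finset.sum_comm]
      exact Finset.sum_congr rfl fun i _ => (Finset.sum_mul _ _ _).symm
    rw [e3, ← Finset.sum_add_distrib, ← Finset.sum_add_distrib]
    refine Finset.sum_eq_zero fun i _ => ?_
    linear_combination (b4 (v i)) * h i
  linear_combination h55 + h33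


/-- The lifted all-ones vector `(1, w)` lies in `L_q` for the RPHP-to-HLF instance,
where `M·ŵ = x̂` over `ZMod 2` and `x` has even Hamming weight. -/
theorem all_ones_mem_Lq {V E : Type} [Fintype V] [Fintype E]
    (M : Matrix V E (ZMod 2)) (hM : ∀ e, ∑ v, M v e = 0)
    (x : V → Bool) (hx : Even (Finset.univ.filter fun v => x v = true).card)
    (w : E → Bool) (hw : ∀ v, ∑ e, M v e * b2 (w e) = b2 (x v)) :
    (Sum.elim (fun _ => true) w) ∈ Lq (hlfA M) (hlfb x) := by
  apply mem_Lq_of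
  · rintro (v1|e1) (v2|e2) <;> rfl
  have φval : ∀ t : ZMod 2, (ZMod.castHom (by norm_num : (2:ℕ) ∣ 4) (ZMod 2)) ((t.val : ZMod 4)) = t := by decide
  have φb4 : ∀ b : Bool, (ZMod.castHom (by norm_num : (2:ℕ) ∣ 4) (ZMod 2)) (b4 b) = b2 b := by decide
  intro i
  have key : (ZMod.castHom (by norm_num : (2:ℕ) ∣ 4) (ZMod 2))
      ((∑ j, hlfA M j i * b4 ((Sum.elim (fun _ => true) w) j))
        + hlfb x i * b4 ((Sum.elim (fun _ => true) w) i)) = 0 := by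
    rw [map_add, map_sum]
    cases i with
    | inl v0 =>
        have : ∀ j : V ⊕ E, (ZMod.castHom (by norm_num : (2:ℕ) ∣ 4) (ZMod 2))
            (hlfA M j (Sum.inl v0) * b4 ((Sum.elim (fun _ => true) w) j))
            = Sum.elim (fun _ : V => (0 : ZMod 2)) (fun e => M v0 e * b2 (w e)) j := by
          rintro (v' | e)
          · simp [hlfA]
          · simp only [hlfA, Sum.elim_inr, map_mul, φval, φb4]
        rw [Finset.sum_congr rfl fun j _ => this j]
        rw [Fintype.sum_sum_type]
        simp only [Sum.elim_inl, Sum.elim_inr, hlfb, Finset.sum_const_zero, zero_add]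
        rw [hw v0, map_mul, φb4, φb4]
        cases x v0 <;> decide
    | inr e0 =>
        have : ∀ j : V ⊕ E, (ZMod.castHom (by norm_num : (2:ℕ) ∣ 4) (ZMod 2))
            (hlfA M j (Sum.inr e0) * b4 ((Sum.elim (fun _ => true) w) j))
            = Sum.elim (fun v => M v e0) (fun _ : E => (0 : ZMod 2)) j := by
          rintro (v' | e)
          · simp only [hlfA, Sum.elim_inl, map_mul, φval, φb4]
            simp [b2]
          · simp [hlfA]
        rw [Finset.sum_congr rfl fun j _ => this j]
        rw [Fintype.sum_sum_type]
        simp only [Sum.elim_inl, Sum.elim_inr, hlfb, Finset.sum_const_zero, add_zero]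
        simp [hM e0]
  exact (by exact fun z h => by revert h; revert z; decide : ∀ z : ZMod 4,
    (ZMod.castHom (by norm_num : (2:ℕ) ∣ 4) (ZMod 2)) z = 0 → 2 * z = 0) _ key
end

section
/- Cycle vectors lie in L_q and constrain all HLF solutions: let V, E be finite types, M : Matrix V E (ZMod 2), x : V → Bool, and form the HLF instance on V ⊕ E with A(inl v, inr e) = A(inr e, inl v) = the {0,1}-lift of M(v,e) in ZMod 4, all other entries of A zero, b(inl v) = the lift of x_v, and b(inr e) = 0. Suppose c : E → Bool satisfies M·ĉ = 0 over ZMod 2 (for every v, ∑_e M(v,e)·ĉ_e = 0, where ĉ_e lifts c_e). Then the vector u₀ with u₀(inl v) = false and u₀(inr e) = c_e lies in L_q and q(u₀) = 0; consequently, every HLF solution p for (A, b) satisfies ∑_e p̂(inr e)·ĉ_e = 0 in ZMod 2. -/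
/-!
On `V ⊕ E` the form is `q(u) = 2·⟨u_V, M u_E⟩ + ⟨x, u_V⟩`, the cross term being a
`ZMod 2`-bilinear form doubled into `ZMod 4`. Flipping the `E`-part of any `w` by a cycle `c`
changes that bilinear form by `⟨w_V, M c⟩ = 0`, so `q((0, c) ⊕ w) = q(w)`; with `q(0, c) = 0`
this puts `(0, c)` in `L_q`, and an HLF solution `p` must then satisfy `2⟨p, (0, c)⟩ = 0`.
-/

open Matrix

lemma b4_eq_lift24_b2 (a : Bool) : b4 a = lift24 (b2 a) := by
  cases a <;> rfl

lemma b2_xor (a a' : Bool) : b2 (xor a a') = b2 a + b2 a' := by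
  cases a <;> cases a' <;> rfl

lemma lift24_mul (s t : ZMod 2) : lift24 (s * t) = lift24 s * lift24 t := by
  revert s t; decide

/-- Doubling turns the `{0,1}`-lift, which is not additive, into an additive embedding. -/
def twiceLift24 : ZMod 2 →+ ZMod 4 where
  toFun t := 2 * lift24 t
  map_zero' := rfl
  map_add' := by decide

lemma twiceLift24_apply (t : ZMod 2) : twiceLift24 t = 2 * lift24 t := rfl

lemma twiceLift24_injective : Function.Injective twiceLift24 := by
  decide

lemma qform_const_false {ι : Type} [Fintype ι] (A : Matrix ι ι (ZMod 4)) (b : ι → ZMod 4) :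
    qform A b (fun _ => false) = 0 := by
  simp [qform, b4]

theorem IsHLFSolution.inner_eq_zero {ι : Type} [Fintype ι] {A : Matrix ι ι (ZMod 4)}
    {b : ι → ZMod 4} {p u : ι → Bool} (hp : IsHLFSolution A b p) (hu : u ∈ Lq A b)
    (hq : qform A b u = 0) : ∑ i, b2 (p i) * b2 (u i) = 0 :=
  twiceLift24_injective <| by rw [twiceLift24_apply, ← hp u hu, hq, map_zero]

section hlf

variable {V E : Type} [Fintype V] [Fintype E] (M : Matrix V E (ZMod 2)) (x : V → Bool)

theorem qform_hlf (u : V ⊕ E → Bool) :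
    qform (hlfA M) (hlfb x) u =
      2 * lift24 ((fun v => b2 (u (Sum.inl v))) ⬝ᵥ M *ᵥ fun e => b2 (u (Sum.inr e)))
        + ∑ v, b4 (x v) * b4 (u (Sum.inl v)) := by
  have hcross : 2 * lift24 ((fun v => b2 (u (Sum.inl v))) ⬝ᵥ M *ᵥ fun e => b2 (u (Sum.inr e))) =
      ∑ v, ∑ e, (lift24 (M v e) * b4 (u (Sum.inl v)) * b4 (u (Sum.inr e)) +
        lift24 (M v e) * b4 (u (Sum.inr e)) * b4 (u (Sum.inl v))) := by
    simp only [dotProduct, mulVec, Finset.mul_sum, ← twiceLift24_apply, map_sum]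
    refine Finset.sum_congr rfl fun v _ => Finset.sum_congr rfl fun e _ => ?_
    simp only [twiceLift24_apply, lift24_mul, b4_eq_lift24_b2]
    ring
  rw [hcross]
  simp only [qform, hlfA, hlfb, Fintype.sum_sum_type, Sum.elim_inl, Sum.elim_inr, zero_mul,
    Finset.sum_const_zero, add_zero, zero_add]
  rw [Finset.sum_comm (s := Finset.univ (α := E))]
  simp only [← Finset.sum_add_distrib]
  rfl

theorem qform_hlf_xor_cycle {c : E → Bool} (hc : M *ᵥ (fun e => b2 (c e)) = 0)
    (w : V ⊕ E → Bool) :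
    qform (hlfA M) (hlfb x) (fun i => xor (Sum.elim (fun _ => false) c i) (w i)) =
      qform (hlfA M) (hlfb x) w := by
  have hxor : (fun e => b2 (xor (c e) (w (Sum.inr e)))) =
      (fun e => b2 (c e)) + fun e => b2 (w (Sum.inr e)) := funext fun e => b2_xor _ _
  simp only [qform_hlf, Sum.elim_inl, Sum.elim_inr, Bool.false_xor, hxor, mulVec_add, hc,
    zero_add]

end hlf

/-- Cycle vectors lie in `L_q`, have `q`-value zero, and constrain all HLF solutions:
if `M·ĉ = 0` over `ZMod 2`, then `(0, c) ∈ L_q`, `q(0, c) = 0`, and every HLF solution `p`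
has even parity on the support of `c` (i.e. `∑_e p̂(inr e)·ĉ_e = 0` in `ZMod 2`). -/
theorem cycle_mem_Lq_and_constrains {V E : Type} [Fintype V] [Fintype E]
    (M : Matrix V E (ZMod 2)) (x : V → Bool)
    (c : E → Bool) (hc : ∀ v, ∑ e, M v e * b2 (c e) = 0) :
    (Sum.elim (fun _ => false) c) ∈ Lq (hlfA M) (hlfb x) ∧
    qform (hlfA M) (hlfb x) (Sum.elim (fun _ => false) c) = 0 ∧
    ∀ p : V ⊕ E → Bool, IsHLFSolution (hlfA M) (hlfb x) p →
      ∑ e, b2 (p (Sum.inr e)) * b2 (c e) = 0 := by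
  have hMc : M *ᵥ (fun e => b2 (c e)) = 0 := funext hc
  have hq0 : qform (hlfA M) (hlfb x) (Sum.elim (fun _ => false) c) = 0 := by
    simpa using (qform_hlf_xor_cycle M x hMc fun _ => false).trans (qform_const_false _ _)
  have hmem : Sum.elim (fun _ => false) c ∈ Lq (hlfA M) (hlfb x) := fun w => by
    rw [qform_hlf_xor_cycle M x hMc, hq0, zero_add]
  refine ⟨hmem, hq0, fun p hp => ?_⟩
  have hpc := hp.inner_eq_zero hmem hq0
  rwa [Fintype.sum_sum_type, Finset.sum_eq_zero fun v _ => by simp [b2], zero_add] at hpc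
end

section
/- Value of the quadratic form on the lifted all-ones vector: let V, E be finite types, M : Matrix V E (ZMod 2) with every column summing to zero, let x : V → Bool have even Hamming weight |x|, and let w : E → Bool satisfy M·ŵ = x̂ over ZMod 2. Form the HLF instance on V ⊕ E with A(inl v, inr e) = A(inr e, inl v) = the {0,1}-lift of M(v,e) in ZMod 4, all other entries of A zero, b(inl v) = the lift of x_v, and b(inr e) = 0. Then the vector u with u(inl v) = true for all v and u(inr e) = w_e satisfies q(u) = (|x| : ZMod 4), the Hamming weight of x reduced mod 4. -/
/-AUX-/
lemma two_mul_eq_zero_of_cast (a : ZMod 4)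
    (h : (ZMod.castHom (show (2:ℕ) ∣ 4 by norm_num) (ZMod 2)) a = 0) : a + a = 0 := by
  revert a; decide

lemma cast_term : ∀ (t : ZMod 2) (u : Bool),
    (ZMod.castHom (by norm_num : (2:ℕ) ∣ 4) (ZMod 2)) (((t.val : ℕ) : ZMod 4) * b4 u)
      = t * b2 u := by decide

theorem qform_all_ones' {V E : Type} [Fintype V] [Fintype E]
    (M : Matrix V E (ZMod 2)) (hM : ∀ e, ∑ v, M v e = 0)
    (x : V → Bool) (hx : Even (Finset.univ.filter fun v => x v = true).card)
    (w : E → Bool) (hw : ∀ v, ∑ e, M v e * b2 (w e) = b2 (x v)) :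
    qform (hlfA M) (hlfb x) (Sum.elim (fun _ => true) w)
      = (((Finset.univ.filter fun v => x v = true).card : ℕ) : ZMod 4) := by
  classical
  set S : ZMod 4 := ∑ v, ∑ e, ((M v e).val : ZMod 4) * b4 (w e) with hS
  have hq : qform (hlfA M) (hlfb x) (Sum.elim (fun _ => true) w)
      = (S + S) + ∑ v, b4 (x v) := by
    unfold qform hlfA hlfb
    rw [Fintype.sum_sum_type]
    simp only [Fintype.sum_sum_type, Sum.elim_inl, Sum.elim_inr]
    have h1 : b4 true = 1 := rfl
    simp only [h1, mul_one, one_mul, zero_mul, mul_zero, Finset.sum_const_zero,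
      add_zero, zero_add]
    rw [show (∑ e : E, ∑ v : V, ((M v e).val : ZMod 4) * b4 (w e)) = S from
      Finset.sum_comm, ← hS]
  have hS2 : S + S = 0 := by
    apply two_mul_eq_zero_of_cast
    rw [hS, map_sum]
    have : ∀ v, (ZMod.castHom (by norm_num : (2:ℕ) ∣ 4) (ZMod 2))
        (∑ e, ((M v e).val : ZMod 4) * b4 (w e)) = b2 (x v) := by
      intro v
      rw [map_sum, ← hw v]
      exact Finset.sum_congr rfl fun e _ => cast_term (M v e) (w e)
    rw [Finset.sum_congr rfl fun v _ => this v]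
    have : (∑ v, b2 (x v))
        = ((Finset.univ.filter fun v => x v = true).card : ZMod 2) := by
      simp [b2, Finset.sum_boole]
    rw [this]
    obtain ⟨k, hk⟩ := hx
    rw [hk]
    push_cast
    rw [← two_mul]
    have h2 : (2 : ZMod 2) = 0 := rfl
    rw [h2, zero_mul]
  rw [hq, hS2, zero_add]
  have : (∑ v, b4 (x v))
      = ((Finset.univ.filter fun v => x v = true).card : ZMod 4) := by
    simp [b4, Finset.sum_boole]
  rw [this]

/-- Value of the quadratic form on the lifted all-ones vector `(1, w)`:
if `M·ŵ = x̂` over `ZMod 2`, `x` has even Hamming weight, and every column of `M` sums to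
zero, then `q(1, w) = |x| (mod 4)`. -/
theorem qform_all_ones {V E : Type} [Fintype V] [Fintype E]
    (M : Matrix V E (ZMod 2)) (hM : ∀ e, ∑ v, M v e = 0)
    (x : V → Bool) (hx : Even (Finset.univ.filter fun v => x v = true).card)
    (w : E → Bool) (hw : ∀ v, ∑ e, M v e * b2 (w e) = b2 (x v)) :
    qform (hlfA M) (hlfb x) (Sum.elim (fun _ => true) w)
      = (((Finset.univ.filter fun v => x v = true).card : ℕ) : ZMod 4) := by
  exact qform_all_ones' M hM x hx w hw
end
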